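/- arXiv:1509.05586 — 8 statements merged into one kernel-verified Lean document; each statement's English description precedes it below -/
import Mathlib

section
/- In a binary matroid, if C1 and C2 are circuits with C1 ∩ C2 nonempty, |C1| odd and |C1 \ C2| odd, and C1 ∪ C2 is inclusion-wise minimal among all such pairs, then the only circuits of the restriction of the matroid to C1 ∪ C2 are C1, C2 and the symmetric difference C1 Δ C2. -/
/-!
Minimality enters only as: if two circuits `D₁, D₂ ⊆ C₁ ∪ C₂` form an odd pair, then
`C₁ ∪ C₂ ⊆ D₁ ∪ D₂`. By binarity, a circuit `D ⊆ C₁ ∪ C₂` other than `C₂` that contains `C₂ \ C₁`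
is `C₁ ∆ C₂`, since the cycle `D ∆ C₂` lies in the circuit `C₁`. For any other circuit `D`, a parity
count makes `(C₁, D)`, `(D, C₂)` or `(D, C₁ ∆ C₂)` an odd pair, which forces such an inclusion or
contradicts `|C₁ ∩ C₂|` being even; when `D` is even and `|C₁ ∩ D|` is odd, the odd pair is built
from an odd circuit inside the odd cycle `C₁ ∆ D`. Applied to a circuit inside the cycle `C₁ ∆ C₂`,
which misses `C₁ ∩ C₂ ≠ ∅`, the same analysis shows that `C₁ ∆ C₂` is itself a circuit.
-/

variable {α : Type*}

/-- `C` is a circuit of the matroid `M`: a minimal dependent set. -/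
def MCircuit (M : Matroid α) (C : Set α) : Prop :=
  M.Dep C ∧ ∀ D ⊂ C, ¬ M.Dep D

/-- `X` is a cycle of `M`: a disjoint union of circuits. -/
def IsCycleM (M : Matroid α) (X : Set α) : Prop :=
  ∃ S : Finset (Set α), (∀ C ∈ S, MCircuit M C) ∧
    (S : Set (Set α)).Pairwise Disjoint ∧ X = ⋃ C ∈ S, C

/-- `M` is binary: the symmetric difference of any two circuits is a disjoint
union of circuits. -/
def BinaryM (M : Matroid α) : Prop :=
  ∀ C1 C2, MCircuit M C1 → MCircuit M C2 → IsCycleM M (symmDiff C1 C2)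

/-- `M` is connected: at least two elements, and any two elements lie on a
common circuit. -/
def ConnectedM (M : Matroid α) : Prop :=
  2 ≤ M.E.ncard ∧ ∀ a ∈ M.E, ∀ b ∈ M.E, a ≠ b →
    ∃ C, MCircuit M C ∧ a ∈ C ∧ b ∈ C

/-- the cycle space of a binary matroid: the `𝔽₂`-span of indicator vectors of
circuits -/
def cycleSpaceM (M : Matroid α) : Submodule (ZMod 2) (α → ZMod 2) :=
  Submodule.span (ZMod 2)
    {x | ∃ C, MCircuit M C ∧ x = Set.indicator C (1 : α → ZMod 2)}

/-- `B` is a cycle basis of `M`: a family of cycles whose indicator vectors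
form a basis of the cycle space. -/
def IsCycleBasisM (M : Matroid α) (B : Finset (Set α)) : Prop :=
  (∀ C ∈ B, IsCycleM M C) ∧
  LinearIndependent (ZMod 2)
    (fun C : B => Set.indicator C.1 (1 : α → ZMod 2)) ∧
  Submodule.span (ZMod 2)
    ((fun C => Set.indicator C (1 : α → ZMod 2)) '' (B : Set (Set α))) = cycleSpaceM M


open Set

lemma mCircuit_iff_isCircuit {M : Matroid α} {C : Set α} : MCircuit M C ↔ M.IsCircuit C := by
  rw [Matroid.isCircuit_iff_forall_ssubset, MCircuit]
  refine and_congr_right fun hC => forall₂_congr fun D hD => ?_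
  rw [Matroid.not_dep_iff (hD.subset.trans hC.subset_ground)]

namespace IsCycleM

variable {M : Matroid α} {X : Set α}

lemma exists_isCircuit_subset (hX : IsCycleM M X) (hne : X.Nonempty) :
    ∃ C ⊆ X, M.IsCircuit C := by
  obtain ⟨S, hS, -, rfl⟩ := hX
  obtain ⟨x, hx⟩ := hne
  obtain ⟨C, hCS, -⟩ := mem_iUnion₂.1 hx
  exact ⟨C, Finset.subset_set_biUnion_of_mem (f := id) hCS, mCircuit_iff_isCircuit.1 (hS C hCS)⟩

lemma eq_of_subset_isCircuit {K : Set α} (hX : IsCycleM M X) (hne : X.Nonempty)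
    (hK : M.IsCircuit K) (hXK : X ⊆ K) : X = K := by
  obtain ⟨C, hCX, hC⟩ := hX.exists_isCircuit_subset hne
  exact hXK.antisymm ((hC.eq_of_subset_isCircuit hK (hCX.trans hXK)) ▸ hCX)

lemma exists_odd_isCircuit_subset (hX : IsCycleM M X) (hodd : Odd X.ncard) :
    ∃ C ⊆ X, M.IsCircuit C ∧ Odd C.ncard := by
  obtain ⟨S, hS, hdisj, rfl⟩ := hX
  have hfin : (⋃ C ∈ S, C).Finite := finite_of_ncard_pos hodd.pos
  by_contra! heven
  refine Nat.not_even_iff_odd.2 hodd ?_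
  rw [← Finset.set_biUnion_coe, Finite.ncard_biUnion (s := fun C => C) S.finite_toSet
    (fun C hC => hfin.subset (Finset.subset_set_biUnion_of_mem (f := id) hC)) hdisj,
    finsum_mem_coe_finset]
  exact Finset.even_sum _ fun C hC => Nat.not_odd_iff_even.1 <|
    heven C (Finset.subset_set_biUnion_of_mem (f := id) hC) (mCircuit_iff_isCircuit.1 (hS C hC))

end IsCycleM

open scoped symmDiff

lemma Set.ncard_symmDiff_add_two_mul_ncard_inter {s t : Set α} (hs : s.Finite) (ht : t.Finite) :
    (s ∆ t).ncard + 2 * (s ∩ t).ncard = s.ncard + t.ncard := by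
  have hdisj : Disjoint (s \ t) (t \ s) := disjoint_sdiff_sdiff
  rw [Set.symmDiff_def, ncard_union_eq hdisj hs.sdiff ht.sdiff,
    ← ncard_inter_add_ncard_sdiff_eq_ncard s t hs, ← ncard_inter_add_ncard_sdiff_eq_ncard t s ht,
    inter_comm t s]
  ring

variable {M : Matroid α} {C₁ C₂ D : Set α}

lemma Matroid.IsCircuit.sdiff_nonempty_of_ne {C : Set α} (hD : M.IsCircuit D) (hC : M.IsCircuit C)
    (h : D ≠ C) : (D \ C).Nonempty :=
  sdiff_nonempty.2 fun hsub => h (hD.eq_of_subset_isCircuit hC hsub)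

lemma BinaryM.eq_symmDiff_of_sdiff_subset (hbin : BinaryM M) (h₁ : M.IsCircuit C₁)
    (h₂ : M.IsCircuit C₂) (hD : M.IsCircuit D) (hDU : D ⊆ C₁ ∪ C₂) (hDC₂ : D ≠ C₂)
    (hsub : C₂ \ C₁ ⊆ D) : D = C₁ ∆ C₂ := by
  have hcycle := hbin D C₂ (mCircuit_iff_isCircuit.2 hD) (mCircuit_iff_isCircuit.2 h₂)
  have hC₁ : D ∆ C₂ = C₁ := hcycle.eq_of_subset_isCircuit (symmDiff_nonempty.2 hDC₂) h₁ <| by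
    rintro x (⟨hxD, hxC₂⟩ | ⟨hxC₂, hxD⟩)
    · exact (hDU hxD).resolve_right hxC₂
    · exact by_contra fun hxC₁ => hxD (hsub ⟨hxC₂, hxC₁⟩)
  rw [← hC₁, symmDiff_symmDiff_cancel_right]

structure IsOddPair (M : Matroid α) (D₁ D₂ : Set α) : Prop where
  isCircuit_left : M.IsCircuit D₁
  isCircuit_right : M.IsCircuit D₂
  inter_nonempty : (D₁ ∩ D₂).Nonempty
  odd_ncard_left : Odd D₁.ncard
  odd_ncard_sdiff : Odd (D₁ \ D₂).ncard

structure IsMinimalOddPair (M : Matroid α) (C₁ C₂ : Set α) : Prop extends IsOddPair M C₁ C₂ where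
  union_eq_of_subset : ∀ D₁ D₂, IsOddPair M D₁ D₂ → D₁ ∪ D₂ ⊆ C₁ ∪ C₂ → D₁ ∪ D₂ = C₁ ∪ C₂

namespace IsMinimalOddPair

lemma subset_union (P : IsMinimalOddPair M C₁ C₂) {D₁ D₂ : Set α} (h : IsOddPair M D₁ D₂)
    (h₁ : D₁ ⊆ C₁ ∪ C₂) (h₂ : D₂ ⊆ C₁ ∪ C₂) : C₁ ∪ C₂ ⊆ D₁ ∪ D₂ :=
  (P.union_eq_of_subset D₁ D₂ h (union_subset h₁ h₂)).ge

lemma finite_left (P : IsMinimalOddPair M C₁ C₂) : C₁.Finite :=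
  finite_of_ncard_pos P.odd_ncard_left.pos

lemma even_ncard_inter (P : IsMinimalOddPair M C₁ C₂) : Even (C₁ ∩ C₂).ncard := by
  have := ncard_inter_add_ncard_sdiff_eq_ncard C₁ C₂ P.finite_left
  have := P.odd_ncard_left
  have := P.odd_ncard_sdiff
  grind

lemma eq_symmDiff_of_even_ncard_inter (hbin : BinaryM M) (P : IsMinimalOddPair M C₁ C₂)
    (hD : M.IsCircuit D) (hDU : D ⊆ C₁ ∪ C₂) (hDC₂ : D ≠ C₂) (heven : Even (C₁ ∩ D).ncard) :
    D = C₁ ∆ C₂ := by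
  obtain ⟨x, hxD, hxC₂⟩ := hD.sdiff_nonempty_of_ne P.isCircuit_right hDC₂
  have hodd : Odd (C₁ \ D).ncard := by
    have := ncard_inter_add_ncard_sdiff_eq_ncard C₁ D P.finite_left
    have := P.odd_ncard_left
    grind
  have hU := P.subset_union ⟨P.isCircuit_left, hD, ⟨x, (hDU hxD).resolve_right hxC₂, hxD⟩,
    P.odd_ncard_left, hodd⟩ subset_union_left hDU
  refine hbin.eq_symmDiff_of_sdiff_subset P.isCircuit_left P.isCircuit_right hD hDU hDC₂ ?_
  exact fun y ⟨hyC₂, hyC₁⟩ => (hU (Or.inr hyC₂)).resolve_left hyC₁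

lemma eq_symmDiff_of_odd_ncard_sdiff (hbin : BinaryM M) (P : IsMinimalOddPair M C₁ C₂)
    (hD : M.IsCircuit D) (hDU : D ⊆ C₁ ∪ C₂) (hDC₁ : D ≠ C₁) (hodd : Odd D.ncard)
    (hodd' : Odd (D \ C₂).ncard) : D = C₁ ∆ C₂ := by
  obtain ⟨x, hxD, hxC₁⟩ := hD.sdiff_nonempty_of_ne P.isCircuit_left hDC₁
  have hU := P.subset_union ⟨hD, P.isCircuit_right, ⟨x, hxD, (hDU hxD).resolve_left hxC₁⟩,
    hodd, hodd'⟩ hDU subset_union_right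
  rw [symmDiff_comm]
  refine hbin.eq_symmDiff_of_sdiff_subset P.isCircuit_right P.isCircuit_left hD
    (union_comm C₁ C₂ ▸ hDU) hDC₁ ?_
  exact fun y ⟨hyC₁, hyC₂⟩ => (hU (Or.inl hyC₁)).resolve_right hyC₂

lemma odd_ncard_sdiff_symmDiff (hbin : BinaryM M) (P : IsMinimalOddPair M C₁ C₂)
    (hD : M.IsCircuit D) (hDU : D ⊆ C₁ ∪ C₂) (hodd : Odd D.ncard) (hDC₁ : D ≠ C₁) (hDC₂ : D ≠ C₂)
    (hDC : D ≠ C₁ ∆ C₂) : Odd (D \ C₁ ∆ C₂).ncard := by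
  have hinter : Odd (C₁ ∩ D).ncard := Nat.not_even_iff_odd.1 fun h =>
    hDC (P.eq_symmDiff_of_even_ncard_inter hbin hD hDU hDC₂ h)
  have hsdiff : Even (D \ C₂).ncard := Nat.not_odd_iff_even.1 fun h =>
    hDC (P.eq_symmDiff_of_odd_ncard_sdiff hbin hD hDU hDC₁ hodd h)
  have hsplit := ncard_inter_add_ncard_sdiff_eq_ncard (C₁ ∩ D) C₂
    ((finite_of_ncard_pos hodd.pos).inter_of_right _)
  have h₁ : C₁ ∩ D ∩ C₂ = D \ C₁ ∆ C₂ := by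
    ext x
    have := @hDU x
    simp only [mem_inter_iff, mem_sdiff, mem_symmDiff, mem_union] at this ⊢
    tauto
  have h₂ : (C₁ ∩ D) \ C₂ = D \ C₂ := by
    ext x
    have := @hDU x
    simp only [mem_inter_iff, mem_sdiff, mem_union] at this ⊢
    tauto
  rw [h₁, h₂] at hsplit
  grind


lemma eq_symmDiff_of_even_of_odd_ncard_inter [M.Finite] (hbin : BinaryM M)
    (P : IsMinimalOddPair M C₁ C₂) (hD : M.IsCircuit D) (hDU : D ⊆ C₁ ∪ C₂)
    (heven : Even D.ncard) (hodd : Odd (C₁ ∩ D).ncard) : D = C₁ ∆ C₂ := by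
  have hC₁ := P.isCircuit_left
  have hDC₂ : D ≠ C₂ := by
    rintro rfl
    exact Nat.not_even_iff_odd.2 hodd P.even_ncard_inter
  have hC₁D : Odd (C₁ ∆ D).ncard := by
    have := ncard_symmDiff_add_two_mul_ncard_inter P.finite_left hD.finite
    have := P.odd_ncard_left
    grind
  have hcycle := hbin C₁ D (mCircuit_iff_isCircuit.2 hC₁) (mCircuit_iff_isCircuit.2 hD)
  obtain ⟨F, hFsub, hF, hFodd⟩ := hcycle.exists_odd_isCircuit_subset hC₁D
  have hFU : F ⊆ C₁ ∪ C₂ :=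
    hFsub.trans (symmDiff_subset_union.trans (union_subset subset_union_left hDU))
  have hmem : ∀ x ∈ F, x ∈ C₁ ↔ x ∉ D := fun x hx => by
    rcases hFsub hx with ⟨h₁, h₂⟩ | ⟨h₁, h₂⟩ <;> tauto
  have hFD : F ∩ D = F \ C₁ := by
    ext x
    exact ⟨fun ⟨hx, hxD⟩ => ⟨hx, fun h => (hmem x hx).1 h hxD⟩,
      fun ⟨hx, hxC₁⟩ => ⟨hx, by_contra fun h => hxC₁ ((hmem x hx).2 h)⟩⟩
  have hFsplit := ncard_inter_add_ncard_sdiff_eq_ncard F D hF.finite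
  rcases Nat.even_or_odd (F ∩ D).ncard with hFDeven | hFDodd
  · -- `F` and `D` form an odd pair, which forces `F \ D = C₁ \ D`, of even size.
    exfalso
    have hFC₁ : F ≠ C₁ := by
      rintro rfl
      obtain ⟨y, hyF, hyD⟩ := nonempty_of_ncard_ne_zero hodd.pos.ne'
      exact (hmem y hyF).1 hyF hyD
    obtain ⟨x, hxF, hxC₁⟩ := hF.sdiff_nonempty_of_ne hC₁ hFC₁
    have hU := P.subset_union ⟨hF, hD, hFD ▸ ⟨x, hxF, hxC₁⟩, hFodd, by grind⟩ hFU hDU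
    have hFC₁D : F \ D = C₁ \ D := by
      ext x
      exact ⟨fun ⟨hx, hxD⟩ => ⟨(hmem x hx).2 hxD, hxD⟩,
        fun ⟨hx, hxD⟩ => ⟨(hU (Or.inl hx)).resolve_right hxD, hxD⟩⟩
    have := ncard_inter_add_ncard_sdiff_eq_ncard C₁ D P.finite_left
    have := P.odd_ncard_left
    rw [hFC₁D] at hFsplit
    grind
  · -- `F` and `C₁` form an odd pair, which forces `C₂ \ C₁ ⊆ F ∩ D`.
    obtain ⟨y, hyF, hyD⟩ := hF.sdiff_nonempty_of_ne hD (by rintro rfl; grind)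
    have hU := P.subset_union ⟨hF, hC₁, ⟨y, hyF, (hmem y hyF).2 hyD⟩, hFodd, hFD ▸ hFDodd⟩
      hFU subset_union_left
    refine hbin.eq_symmDiff_of_sdiff_subset hC₁ P.isCircuit_right hD hDU hDC₂ ?_
    intro z ⟨hzC₂, hzC₁⟩
    have hzF : z ∈ F := (hU (Or.inr hzC₂)).resolve_right hzC₁
    exact (hFD.symm ▸ ⟨hzF, hzC₁⟩ : z ∈ F ∩ D).2

lemma eq_symmDiff_of_even [M.Finite] (hbin : BinaryM M) (P : IsMinimalOddPair M C₁ C₂)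
    (hD : M.IsCircuit D) (hDU : D ⊆ C₁ ∪ C₂) (heven : Even D.ncard) (hDC₂ : D ≠ C₂) :
    D = C₁ ∆ C₂ := by
  rcases Nat.even_or_odd (C₁ ∩ D).ncard with h | h
  · exact P.eq_symmDiff_of_even_ncard_inter hbin hD hDU hDC₂ h
  · exact P.eq_symmDiff_of_even_of_odd_ncard_inter hbin hD hDU heven h

lemma isCircuit_symmDiff [M.Finite] (hbin : BinaryM M) (P : IsMinimalOddPair M C₁ C₂) :
    M.IsCircuit (C₁ ∆ C₂) := by
  have hC₁ := P.isCircuit_left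
  have hC₂ := P.isCircuit_right
  obtain ⟨E, hEsub, hE⟩ := (hbin C₁ C₂ (mCircuit_iff_isCircuit.2 hC₁)
    (mCircuit_iff_isCircuit.2 hC₂)).exists_isCircuit_subset <| by
    rw [symmDiff_nonempty]
    rintro rfl
    simpa using P.odd_ncard_sdiff
  obtain ⟨z, hz₁, hz₂⟩ := P.inter_nonempty
  have hzE : z ∉ E := fun hz => by rcases hEsub hz with ⟨-, h⟩ | ⟨-, h⟩ <;> contradiction
  have hEU : E ⊆ C₁ ∪ C₂ := hEsub.trans symmDiff_subset_union
  by_contra hne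
  have hEC : E ≠ C₁ ∆ C₂ := by rintro rfl; exact hne hE
  rcases Nat.even_or_odd E.ncard with heven | hodd
  · exact hEC (P.eq_symmDiff_of_even hbin hE hEU heven (by rintro rfl; exact hzE hz₂))
  · have := P.odd_ncard_sdiff_symmDiff hbin hE hEU hodd (by rintro rfl; exact hzE hz₁)
      (by rintro rfl; exact hzE hz₂) hEC
    rw [sdiff_eq_empty.2 hEsub, ncard_empty] at this
    exact Nat.not_odd_zero this

lemma eq_of_isCircuit_subset [M.Finite] (hbin : BinaryM M) (P : IsMinimalOddPair M C₁ C₂)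
    (hD : M.IsCircuit D) (hDU : D ⊆ C₁ ∪ C₂) : D = C₁ ∨ D = C₂ ∨ D = C₁ ∆ C₂ := by
  by_contra! ⟨hDC₁, hDC₂, hDC⟩
  rcases Nat.even_or_odd D.ncard with heven | hodd
  · exact hDC (P.eq_symmDiff_of_even hbin hD hDU heven hDC₂)
  have hodd' := P.odd_ncard_sdiff_symmDiff hbin hD hDU hodd hDC₁ hDC₂ hDC
  obtain ⟨x, hxD, hxC₂⟩ := hD.sdiff_nonempty_of_ne P.isCircuit_right hDC₂
  have hxC : x ∈ C₁ ∆ C₂ := Or.inl ⟨(hDU hxD).resolve_right hxC₂, hxC₂⟩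
  -- the odd pair `D, C₁ ∆ C₂` forces `D \ (C₁ ∆ C₂) = C₁ ∩ C₂`, of even size
  have hU := P.subset_union ⟨hD, P.isCircuit_symmDiff hbin, ⟨x, hxD, hxC⟩, hodd, hodd'⟩ hDU
    symmDiff_subset_union
  have hDC' : D \ C₁ ∆ C₂ = C₁ ∩ C₂ := by
    ext y
    have := @hDU y
    have := @hU y
    simp only [mem_sdiff, mem_symmDiff, mem_inter_iff, mem_union] at *
    tauto
  exact Nat.not_even_iff_odd.2 (hDC' ▸ hodd') P.even_ncard_inter

end IsMinimalOddPair

open scoped Matroid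

/-- in a binary matroid, for a minimal pair of circuits `C1, C2`
with nonempty intersection, `|C1|` odd and `|C1 \ C2|` odd, the only circuits
of the restriction to `C1 ∪ C2` are `C1`, `C2` and `C1 Δ C2`. -/
theorem stmt5 {α : Type*} (M : Matroid α) [M.Finite] (hbin : BinaryM M)
    (C1 C2 : Set α) (h1 : MCircuit M C1) (h2 : MCircuit M C2)
    (hne : (C1 ∩ C2).Nonempty) (ho1 : Odd C1.ncard) (ho2 : Odd (C1 \ C2).ncard)
    (hmin : ∀ D1 D2 : Set α, MCircuit M D1 → MCircuit M D2 →
      (D1 ∩ D2).Nonempty → Odd D1.ncard → Odd (D1 \ D2).ncard →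
      D1 ∪ D2 ⊆ C1 ∪ C2 → D1 ∪ D2 = C1 ∪ C2) :
    ∀ C : Set α, MCircuit (M ↾ (C1 ∪ C2)) C ↔
      (C = C1 ∨ C = C2 ∨ C = symmDiff C1 C2) := by
  rw [mCircuit_iff_isCircuit] at h1 h2
  have P : IsMinimalOddPair M C1 C2 := ⟨⟨h1, h2, hne, ho1, ho2⟩, fun D1 D2 h =>
    hmin D1 D2 (mCircuit_iff_isCircuit.2 h.1) (mCircuit_iff_isCircuit.2 h.2) h.3 h.4 h.5⟩
  intro C
  rw [mCircuit_iff_isCircuit, Matroid.restrict_isCircuit_iff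
    (union_subset h1.subset_ground h2.subset_ground)]
  refine ⟨fun ⟨hC, hCU⟩ => P.eq_of_isCircuit_subset hbin hC hCU, ?_⟩
  rintro (rfl | rfl | rfl)
  exacts [⟨h1, subset_union_left⟩, ⟨h2, subset_union_right⟩,
    ⟨P.isCircuit_symmDiff hbin, symmDiff_subset_union⟩]
end

section
/- A connected binary matroid contains a restriction isomorphic to the circuit matroid of a totally odd subdivision of C3+ if and only if it has two odd circuits that intersect in an even number of elements. -/
variable {α : Type*}

open scoped Matroid

/-!
Call `(X, C)` an odd pair if `X` is an odd circuit and `C` is a circuit meeting `X` with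
`|C \ X|` odd. Fix `X` and take `C` with `X ∪ C` minimal. Every circuit `W ⊆ X ∪ C` with
`|W \ X|` odd is then `C` or `X ∆ C`: otherwise either `(X, W)` is a smaller odd pair, or
`W \ X = C \ X` and binarity gives `W ∆ C = X`. In a binary matroid a cycle meeting `C \ X`
in an odd number of elements contains a circuit that does so as well; applied to `X ∆ C` this
shows that `X ∆ C` is a circuit, and applied to `D ∆ (X ∆ C)` it forces every other circuit
`D ⊆ X ∪ C` into `X`.

Two odd circuits `D₁, D₂` with even intersection form an odd pair if they meet. If they are
disjoint, connectivity gives a circuit `K` meeting both; for `|K \ D₁|` minimal, either `(D₁, K)`,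
`(D₂, K)` or `(D₂, K ∆ D₁)` is an odd pair. Conversely, `C₁` meets one of `C₂` and `C₁ ∆ C₂` in
an even number of elements.
-/

open Set
open scoped symmDiff

lemma odd_ncard_sdiff_iff {A B : Set α} (hA : A.Finite) :
    Odd (A \ B).ncard ↔ (Odd A.ncard ↔ Even (A ∩ B).ncard) := by
  rw [← ncard_inter_add_ncard_sdiff_eq_ncard A B hA, Nat.odd_add']
  tauto

lemma odd_ncard_symmDiff_iff {A B : Set α} (hA : A.Finite) (hB : B.Finite) :
    Odd (A ∆ B).ncard ↔ (Odd A.ncard ↔ Even B.ncard) := by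
  have hAB := ncard_inter_add_ncard_sdiff_eq_ncard A B hA
  have hBA := ncard_inter_add_ncard_sdiff_eq_ncard B A hB
  rw [inter_comm] at hBA
  rw [Set.symmDiff_def, ncard_union_eq disjoint_sdiff_sdiff hA.sdiff hB.sdiff]
  grind

lemma finite_union_of_odd_ncard {X C : Set α} (hX : Odd X.ncard) (hC : Odd (C \ X).ncard) :
    (X ∪ C).Finite := by
  rw [← union_sdiff_self]
  exact (finite_of_ncard_pos hX.pos).union (finite_of_ncard_pos hC.pos)

lemma inter_sdiff_eq_sdiff_of_subset_union {W X C : Set α} (h : W ⊆ X ∪ C) :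
    W ∩ (C \ X) = W \ X := by
  ext x
  exact ⟨fun ⟨hW, _, hX⟩ => ⟨hW, hX⟩, fun ⟨hW, hX⟩ => ⟨hW, (h hW).resolve_left hX, hX⟩⟩

namespace MCircuit

variable {M : Matroid α} {C D X : Set α}

lemma nonempty (h : MCircuit M C) : C.Nonempty := h.1.nonempty

lemma finite [M.Finite] (h : MCircuit M C) : C.Finite :=
  M.ground_finite.subset h.1.subset_ground

lemma eq_of_subset (hC : MCircuit M C) (hD : MCircuit M D) (h : D ⊆ C) : D = C :=
  by_contra fun hne => hC.2 D (h.ssubset_of_ne hne) hD.1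

lemma not_subset_sdiff (hC : MCircuit M C) (hD : MCircuit M D) (hX : (C ∩ X).Nonempty) :
    ¬ D ⊆ C \ X := fun h =>
  (sdiff_ssubset_left_iff.2 hX).not_subset ((hC.eq_of_subset hD (h.trans sdiff_subset)) ▸ h)

end MCircuit

namespace IsCycleM

variable {M : Matroid α} {Z T : Set α}

lemma exists_mcircuit_mem {x : α} (hZ : IsCycleM M Z) (hx : x ∈ Z) :
    ∃ W, MCircuit M W ∧ x ∈ W ∧ W ⊆ Z ∧ IsCycleM M (Z \ W) := by
  classical
  obtain ⟨S, hSc, hSd, rfl⟩ := hZ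
  obtain ⟨W, hWS, hxW⟩ := mem_iUnion₂.1 hx
  refine ⟨W, hSc W hWS, hxW, subset_biUnion_of_mem (u := id) hWS, S.erase W,
    fun V hV => hSc V (Finset.mem_of_mem_erase hV), hSd.mono (by simp), ?_⟩
  ext y
  simp only [mem_sdiff, mem_iUnion, Finset.mem_erase, exists_prop]
  constructor
  · rintro ⟨⟨V, hVS, hyV⟩, hyW⟩
    exact ⟨V, ⟨fun h => hyW (h ▸ hyV), hVS⟩, hyV⟩
  · rintro ⟨V, ⟨hVW, hVS⟩, hyV⟩
    exact ⟨⟨V, hVS, hyV⟩, fun hyW => (hSd hVS hWS hVW).ne_of_mem hyV hyW rfl⟩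

lemma exists_mcircuit_odd_inter (hZ : IsCycleM M Z) (hfin : Z.Finite)
    (hodd : Odd (Z ∩ T).ncard) : ∃ W, MCircuit M W ∧ W ⊆ Z ∧ Odd (W ∩ T).ncard := by
  induction hn : Z.ncard using Nat.strong_induction_on generalizing Z with
  | _ n ih =>
  obtain ⟨x, hxZ, -⟩ := nonempty_of_ncard_ne_zero hodd.pos.ne'
  obtain ⟨W, hW, hxW, hWZ, hrest⟩ := hZ.exists_mcircuit_mem hxZ
  by_cases hWodd : Odd (W ∩ T).ncard
  · exact ⟨W, hW, hWZ, hWodd⟩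
  have hrest_odd : Odd ((Z \ W) ∩ T).ncard := by
    rw [← inter_sdiff_right_comm, odd_ncard_sdiff_iff (hfin.inter_of_left T),
      inter_right_comm, inter_eq_right.2 hWZ, ← Nat.not_odd_iff_even]
    exact iff_of_true hodd hWodd
  have hlt : (Z \ W).ncard < n :=
    hn ▸ ncard_lt_ncard (sdiff_ssubset_left_iff.2 ⟨x, hxZ, hxW⟩) hfin
  obtain ⟨V, hV, hVZ, hVodd⟩ := ih _ hlt hrest hfin.sdiff hrest_odd rfl
  exact ⟨V, hV, hVZ.trans sdiff_subset, hVodd⟩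

end IsCycleM

lemma BinaryM.symmDiff_eq_of_subset {M : Matroid α} {C D X : Set α} (hbin : BinaryM M)
    (hC : MCircuit M C) (hD : MCircuit M D) (hX : MCircuit M X) (hCD : C ≠ D)
    (h : C ∆ D ⊆ X) : C ∆ D = X := by
  obtain ⟨x, hx⟩ : (C ∆ D).Nonempty := nonempty_iff_ne_empty.2 (symmDiff_eq_empty.not.2 hCD)
  obtain ⟨W, hW, -, hWsub, -⟩ := (hbin C D hC hD).exists_mcircuit_mem hx
  exact h.antisymm (hX.eq_of_subset hW (hWsub.trans h) ▸ hWsub)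

structure IsOddPair_s6 (M : Matroid α) (X C : Set α) : Prop where
  mcircuit_left : MCircuit M X
  mcircuit_right : MCircuit M C
  odd_left : Odd X.ncard
  odd_sdiff : Odd (C \ X).ncard
  inter_nonempty : (X ∩ C).Nonempty

def IsMinOddPair (M : Matroid α) (X C : Set α) : Prop :=
  IsOddPair_s6 M X C ∧ ∀ W, IsOddPair_s6 M X W → ¬ X ∪ W ⊂ X ∪ C

namespace IsOddPair_s6

variable {M : Matroid α} {X C : Set α}

lemma finite_union (hp : IsOddPair_s6 M X C) : (X ∪ C).Finite :=
  finite_union_of_odd_ncard hp.odd_left hp.odd_sdiff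

lemma exists_isMinOddPair {C₀ : Set α} (hp : IsOddPair_s6 M X C₀) : ∃ C, IsMinOddPair M X C := by
  obtain ⟨C, hC, hmin⟩ :=
    exists_minimalFor_of_wellFoundedLT (IsOddPair_s6 M X) (fun C => (X ∪ C).ncard) ⟨C₀, hp⟩
  refine ⟨C, hC, fun W hW hlt => ?_⟩
  have hcard := ncard_lt_ncard hlt hC.finite_union
  exact hcard.not_ge (hmin hW hcard.le)

lemma ne (hp : IsOddPair_s6 M X C) : X ≠ C := by
  rintro rfl
  simpa using hp.odd_sdiff

end IsOddPair_s6

namespace IsMinOddPair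

variable {M : Matroid α} {X C W D : Set α}

lemma eq_or_eq_symmDiff (hbin : BinaryM M) (hp : IsMinOddPair M X C) (hW : MCircuit M W)
    (hWs : W ⊆ X ∪ C) (hWodd : Odd (W \ X).ncard) : W = C ∨ W = X ∆ C := by
  obtain ⟨⟨hX, hC, hXodd, -, hXC⟩, hmin⟩ := hp
  have hXW : (X ∩ W).Nonempty := by
    by_contra hXW
    have hWX : ∀ x ∈ W, x ∉ X := fun x hxW hxX => hXW ⟨x, hxX, hxW⟩
    exact hC.not_subset_sdiff hW (inter_comm X C ▸ hXC) fun x hx =>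
      ⟨(hWs hx).resolve_left (hWX x hx), hWX x hx⟩
  by_cases hcov : C \ X ⊆ W
  · by_cases hWC : W = C
    · exact Or.inl hWC
    have hsub : W ∆ C ⊆ X := by
      rintro x (⟨hxW, hxC⟩ | ⟨hxC, hxW⟩) <;> by_contra hxX
      · exact hxC ((hWs hxW).resolve_left hxX)
      · exact hxW (hcov ⟨hxC, hxX⟩)
    right
    rw [← hbin.symmDiff_eq_of_subset hW hC hX hWC hsub, symmDiff_symmDiff_cancel_right]
  · obtain ⟨e, ⟨heC, heX⟩, heW⟩ := not_subset.1 hcov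
    refine absurd ((ssubset_iff_of_subset (union_subset subset_union_left hWs)).2 ?_)
      (hmin W ⟨hX, hW, hXodd, hWodd, hXW⟩)
    exact ⟨e, Or.inr heC, by rintro (h | h) <;> contradiction⟩

lemma mcircuit_symmDiff (hbin : BinaryM M) (hp : IsMinOddPair M X C) : MCircuit M (X ∆ C) := by
  obtain ⟨hX, hC, -, hCX, ⟨x, hxX, hxC⟩⟩ := hp.1
  have hCX_sub : C \ X ⊆ X ∆ C := subset_union_right
  obtain ⟨W, hW, hWsub, hWodd⟩ := (hbin X C hX hC).exists_mcircuit_odd_inter (T := C \ X)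
    (hp.1.finite_union.subset symmDiff_subset_union) (by rwa [inter_eq_right.2 hCX_sub])
  have hWs : W ⊆ X ∪ C := hWsub.trans symmDiff_subset_union
  rw [inter_sdiff_eq_sdiff_of_subset_union hWs] at hWodd
  obtain rfl | rfl := hp.eq_or_eq_symmDiff hbin hW hWs hWodd
  · rcases hWsub hxC with ⟨-, h⟩ | ⟨-, h⟩ <;> contradiction
  · exact hW

lemma eq_of_subset_union (hbin : BinaryM M) (hp : IsMinOddPair M X C) (hD : MCircuit M D)
    (hDs : D ⊆ X ∪ C) : D = X ∨ D = C ∨ D = X ∆ C := by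
  by_cases hDodd : Odd (D \ X).ncard
  · exact Or.inr (hp.eq_or_eq_symmDiff hbin hD hDs hDodd)
  left
  have hE := hp.mcircuit_symmDiff hbin
  have hCX_sub : C \ X ⊆ X ∆ C := subset_union_right
  have hDE_sub : D ∆ (X ∆ C) ⊆ X ∪ C :=
    symmDiff_subset_union.trans (union_subset hDs symmDiff_subset_union)
  have hodd : Odd ((D ∆ (X ∆ C)) ∩ (C \ X)).ncard := by
    have htrace : (D ∆ (X ∆ C)) ∩ (C \ X) = (C \ X) \ D := by
      ext x
      have := @hCX_sub x
      simp only [mem_inter_iff, mem_sdiff, Set.mem_symmDiff] at this ⊢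
      tauto
    have hfin : (C \ X).Finite := hp.1.finite_union.subset (sdiff_subset.trans subset_union_right)
    rw [htrace, odd_ncard_sdiff_iff hfin, inter_comm, inter_sdiff_eq_sdiff_of_subset_union hDs,
      ← Nat.not_odd_iff_even]
    exact iff_of_true hp.1.odd_sdiff hDodd
  obtain ⟨Z, hZ, hZsub, hZodd⟩ :=
    (hbin D _ hD hE).exists_mcircuit_odd_inter (hp.1.finite_union.subset hDE_sub) hodd
  have hZs : Z ⊆ X ∪ C := hZsub.trans hDE_sub
  rw [inter_sdiff_eq_sdiff_of_subset_union hZs] at hZodd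
  have hZ_sup : C \ X ⊆ Z := by
    obtain rfl | rfl := hp.eq_or_eq_symmDiff hbin hZ hZs hZodd
    · exact sdiff_subset
    · exact hCX_sub
  have hDX : D ⊆ X := fun x hxD => by_contra fun hxX => by
    have hx : x ∈ C \ X := ⟨(hDs hxD).resolve_left hxX, hxX⟩
    rcases hZsub (hZ_sup hx) with ⟨-, h⟩ | ⟨-, h⟩
    · exact h (hCX_sub hx)
    · exact h hxD
  exact hp.1.mcircuit_left.eq_of_subset hD hDX

end IsMinOddPair

lemma exists_isOddPair_of_disjoint {M : Matroid α} [M.Finite] {D₁ D₂ : Set α}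
    (hconn : ConnectedM M) (hbin : BinaryM M) (h₁ : MCircuit M D₁) (h₂ : MCircuit M D₂)
    (ho₁ : Odd D₁.ncard) (ho₂ : Odd D₂.ncard) (hdisj : D₁ ∩ D₂ = ∅) :
    ∃ X C, IsOddPair_s6 M X C := by
  obtain ⟨a, ha⟩ := h₁.nonempty
  obtain ⟨b, hb⟩ := h₂.nonempty
  obtain ⟨K₀, hK₀, haK₀, hbK₀⟩ := hconn.2 a (h₁.1.subset_ground ha) b (h₂.1.subset_ground hb)
    fun hab => hdisj.subset ⟨ha, hab ▸ hb⟩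
  obtain ⟨K, ⟨hK, hK₁, hK₂⟩, hKmin⟩ := exists_minimalFor_of_wellFoundedLT
    (fun K => MCircuit M K ∧ (K ∩ D₁).Nonempty ∧ (K ∩ D₂).Nonempty) (fun K => (K \ D₁).ncard)
    ⟨K₀, hK₀, ⟨a, haK₀, ha⟩, ⟨b, hbK₀, hb⟩⟩
  by_cases hK₁odd : Odd (K \ D₁).ncard
  · exact ⟨D₁, K, h₁, hK, ho₁, hK₁odd, inter_comm K D₁ ▸ hK₁⟩
  by_cases hK₂odd : Odd (K \ D₂).ncard
  · exact ⟨D₂, K, h₂, hK, ho₂, hK₂odd, inter_comm K D₂ ▸ hK₂⟩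
  -- minimality of `|K \ D₁|` makes `K ∆ D₁` a circuit; it leaves `D₂` in an odd number of elements
  obtain ⟨c, hcK, hc₂⟩ := hK₂
  have hcZ : c ∈ K ∆ D₁ := Or.inl ⟨hcK, fun hc₁ => hdisj.subset ⟨hc₁, hc₂⟩⟩
  obtain ⟨W, hW, hcW, hWZ, hrest⟩ := (hbin K D₁ hK h₁).exists_mcircuit_mem hcZ
  have hW₁ : (W ∩ D₁).Nonempty := by
    by_contra hW₁
    refine hK.not_subset_sdiff hW hK₁ fun x hx => ?_
    rcases hWZ hx with hx' | ⟨hx₁, -⟩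
    · exact hx'
    · exact absurd ⟨x, hx, hx₁⟩ hW₁
  have hWK : W \ D₁ = K \ D₁ := by
    have hsub : W \ D₁ ⊆ K \ D₁ := fun x ⟨hxW, hx₁⟩ =>
      (hWZ hxW).resolve_right fun h => hx₁ h.1
    exact eq_of_subset_of_ncard_le hsub (hKmin ⟨hW, hW₁, c, hcW, hc₂⟩
      (ncard_le_ncard hsub (hK.finite.sdiff))) (hK.finite.sdiff)
  have hWeq : W = K ∆ D₁ := by
    refine hWZ.antisymm fun x hxZ => by_contra fun hxW => ?_
    obtain ⟨V, hV, -, hVsub, -⟩ := hrest.exists_mcircuit_mem ⟨hxZ, hxW⟩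
    refine h₁.not_subset_sdiff hV (inter_comm K D₁ ▸ hK₁) fun y hy => ?_
    rcases (hVsub hy).1 with hy' | hy'
    · exact absurd (hWK ▸ hy').1 (hVsub hy).2
    · exact hy'
  have hparity : Odd (K ∆ D₁ \ D₂).ncard := by
    have hset : K ∆ D₁ \ D₂ = (K \ D₂) ∆ D₁ := by
      ext x
      have : x ∈ D₁ → x ∉ D₂ := fun hx₁ hx₂ => hdisj.subset ⟨hx₁, hx₂⟩
      simp only [mem_sdiff, Set.mem_symmDiff] at this ⊢
      tauto
    rw [hset, odd_ncard_symmDiff_iff hK.finite.sdiff h₁.finite, ← Nat.not_odd_iff_even]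
    tauto
  exact ⟨D₂, W, h₂, hW, ho₂, hWeq ▸ hparity, c, hc₂, hcW⟩

lemma exists_isOddPair {M : Matroid α} [M.Finite] {D₁ D₂ : Set α}
    (hconn : ConnectedM M) (hbin : BinaryM M) (h₁ : MCircuit M D₁) (h₂ : MCircuit M D₂)
    (ho₁ : Odd D₁.ncard) (ho₂ : Odd D₂.ncard) (he : Even (D₁ ∩ D₂).ncard) :
    ∃ X C, IsOddPair_s6 M X C := by
  obtain hdisj | hmeet := (D₁ ∩ D₂).eq_empty_or_nonempty
  · exact exists_isOddPair_of_disjoint hconn hbin h₁ h₂ ho₁ ho₂ hdisj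
  refine ⟨D₁, D₂, h₁, h₂, ho₁, ?_, hmeet⟩
  rw [odd_ncard_sdiff_iff h₂.finite, inter_comm]
  exact iff_of_true ho₂ he

lemma exists_odd_mcircuits_of_odd_sdiff {M : Matroid α} {C₁ C₂ : Set α}
    (h₁ : MCircuit M C₁) (h₂ : MCircuit M C₂) (h₃ : MCircuit M (C₁ ∆ C₂))
    (ho₁ : Odd C₁.ncard) (hd : Odd (C₂ \ C₁).ncard) :
    ∃ D₁ D₂ : Set α, MCircuit M D₁ ∧ MCircuit M D₂ ∧
      Odd D₁.ncard ∧ Odd D₂.ncard ∧ Even (D₁ ∩ D₂).ncard := by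
  have hfin := finite_union_of_odd_ncard ho₁ hd
  have hC₂ : Odd C₂.ncard ↔ Even (C₁ ∩ C₂).ncard := by
    rw [inter_comm, ← odd_ncard_sdiff_iff (hfin.subset subset_union_right)]
    exact hd
  by_cases he : Even (C₁ ∩ C₂).ncard
  · exact ⟨C₁, C₂, h₁, h₂, ho₁, hC₂.2 he, he⟩
  refine ⟨C₁, C₁ ∆ C₂, h₁, h₃, ho₁, ?_, ?_⟩
  · rw [odd_ncard_symmDiff_iff (hfin.subset subset_union_left) (hfin.subset subset_union_right),
      ← Nat.not_odd_iff_even]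
    tauto
  · rw [inter_symmDiff_distrib_left, inter_self, symmDiff_of_ge inter_subset_left, sdiff_self_inter,
      ← Nat.not_odd_iff_even, odd_ncard_sdiff_iff (hfin.subset subset_union_left)]
    tauto

/-- a connected binary matroid has a restriction isomorphic to
the circuit matroid of a totally odd subdivision of `C3+` iff it has two odd
circuits intersecting in an even number of elements. -/
theorem stmt6 {α : Type*} (M : Matroid α) [M.Finite]
    (hconn : ConnectedM M) (hbin : BinaryM M) :
    (∃ C1 C2 : Set α, MCircuit M C1 ∧ MCircuit M C2 ∧ C1 ≠ C2 ∧
      Odd C1.ncard ∧ Odd (C2 \ C1).ncard ∧ MCircuit M (symmDiff C1 C2) ∧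
      ∀ C : Set α, MCircuit M C → C ⊆ C1 ∪ C2 →
        (C = C1 ∨ C = C2 ∨ C = symmDiff C1 C2)) ↔
    (∃ D1 D2 : Set α, MCircuit M D1 ∧ MCircuit M D2 ∧
      Odd D1.ncard ∧ Odd D2.ncard ∧ Even (D1 ∩ D2).ncard) := by
  constructor
  · rintro ⟨C1, C2, h1, h2, -, ho1, hd, h3, -⟩
    exact exists_odd_mcircuits_of_odd_sdiff h1 h2 h3 ho1 hd
  · rintro ⟨D1, D2, h1, h2, ho1, ho2, he⟩
    obtain ⟨X, C₀, hp₀⟩ := exists_isOddPair hconn hbin h1 h2 ho1 ho2 he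
    obtain ⟨C, hp⟩ := hp₀.exists_isMinOddPair
    exact ⟨X, C, hp.1.mcircuit_left, hp.1.mcircuit_right, hp.1.ne, hp.1.odd_left,
      hp.1.odd_sdiff, hp.mcircuit_symmDiff hbin, fun D hD hDs => hp.eq_of_subset_union hbin hD hDs⟩
end

section
/- Every element of a connected binary matroid lies in a circuit of odd cardinality, provided the matroid has at least one odd circuit. -/
variable {α : Type*}

open scoped Matroid

section Aux

lemma mcirc_eq_of_subset {M : Matroid α} {D C : Set α} (hD : MCircuit M D)
    (hC : MCircuit M C) (h : D ⊆ C) : D = C := by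
  rcases h.ssubset_or_eq with h' | h'
  · exact absurd hD.1 (hC.2 D h')
  · exact h'

lemma mcirc_nonempty {M : Matroid α} {C : Set α} (hC : MCircuit M C) : C.Nonempty := by
  rw [Set.nonempty_iff_ne_empty]
  rintro rfl
  exact hC.1.not_indep M.empty_indep

lemma mcirc_finite {M : Matroid α} [M.Finite] {C : Set α} (hC : MCircuit M C) : C.Finite :=
  M.ground_finite.subset hC.1.subset_ground

lemma indicator_symmDiff' (A B : Set α) :
    Set.indicator (symmDiff A B) (1 : α → ZMod 2) =
      Set.indicator A (1 : α → ZMod 2) + Set.indicator B (1 : α → ZMod 2) := by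
  classical
  funext x
  by_cases hA : x ∈ A <;> by_cases hB : x ∈ B <;>
    simp [Set.indicator_apply, Set.mem_symmDiff, hA, hB] <;> decide

lemma indicator_biUnion' (S : Finset (Set α))
    (hdis : (S : Set (Set α)).Pairwise Disjoint) :
    Set.indicator (⋃ C ∈ S, C) (1 : α → ZMod 2) =
      ∑ C ∈ S, Set.indicator C (1 : α → ZMod 2) := by
  classical
  induction S using Finset.induction_on with
  | empty => ext x; simp
  | @insert A S hA ih =>
      have hdis' : (S : Set (Set α)).Pairwise Disjoint := by
        apply hdis.mono
        rw [Finset.coe_insert]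
        exact Set.subset_insert _ _
      have hd : Disjoint A (⋃ C ∈ S, C) := by
        rw [Set.disjoint_iUnion₂_right]
        intro B hB
        exact hdis (by simp) (by simp [hB]) (by rintro rfl; exact hA hB)
      rw [Finset.set_biUnion_insert, Finset.sum_insert hA,
        Set.indicator_union_of_disjoint hd, ih hdis']
      rfl

/-- the span of indicators of circuits through `e` -/
def oddSp (M : Matroid α) (e : α) : Submodule (ZMod 2) (α → ZMod 2) :=
  Submodule.span (ZMod 2)
    {x | ∃ C, MCircuit M C ∧ e ∈ C ∧ x = Set.indicator C (1 : α → ZMod 2)}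

/-- Key lemma: any circuit's indicator lies in the span of indicators of
circuits through `e`, given a witness circuit through `e` meeting it. -/
lemma key_span (M : Matroid α) [M.Finite] (hbin : BinaryM M) (e : α) :
    ∀ n : ℕ, ∀ Z C : Set α, MCircuit M Z → e ∉ Z → MCircuit M C → e ∈ C →
      (Z ∩ C).Nonempty → (Z \ C).ncard ≤ n →
      Set.indicator Z (1 : α → ZMod 2) ∈ oddSp M e := by
  intro n
  induction n with
  | zero =>
      intro Z C hZ heZ hC heC hne hcard
      exfalso
      have hfin : (Z \ C).Finite := (mcirc_finite hZ).subset Set.diff_subset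
      have hempty : Z \ C = ∅ := (Set.ncard_eq_zero hfin).mp (Nat.le_zero.mp hcard)
      have hsub : Z ⊆ C := by
        intro x hx
        by_contra hxC
        have : x ∈ Z \ C := ⟨hx, hxC⟩
        rw [hempty] at this
        exact this
      exact heZ ((mcirc_eq_of_subset hZ hC hsub) ▸ heC)
  | succ n ih =>
      intro Z C hZ heZ hC heC hne hcard
      obtain ⟨S, hS, hdis, hU⟩ := hbin Z C hZ hC
      have hZfin := mcirc_finite hZ
      have hx : Set.indicator Z (1 : α → ZMod 2) =
          Set.indicator (symmDiff Z C) (1 : α → ZMod 2) +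
            Set.indicator C (1 : α → ZMod 2) := by
        rw [indicator_symmDiff']
        funext x
        have h2 : ∀ a b : ZMod 2, a = (a + b) + b := by decide
        simp only [Pi.add_apply]
        exact h2 _ _
      rw [hx, hU, indicator_biUnion' S hdis]
      refine Submodule.add_mem _ (Submodule.sum_mem _ ?_)
        (Submodule.subset_span ⟨C, hC, heC, rfl⟩)
      intro D hD
      by_cases heD : e ∈ D
      · exact Submodule.subset_span ⟨D, hS D hD, heD, rfl⟩
      have hDsub : D ⊆ symmDiff Z C := by
        rw [hU]; exact fun x hx => Set.mem_biUnion hD hx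
      by_cases hDCne : (D ∩ C).Nonempty
      · by_cases hZCD : Z \ C ⊆ D
        · exfalso
          have hsub : symmDiff Z D ⊆ C := by
            intro x hx
            rcases Set.mem_symmDiff.mp hx with ⟨hxZ, hxD⟩ | ⟨hxD, hxZ⟩
            · by_contra hxC
              exact hxD (hZCD ⟨hxZ, hxC⟩)
            · rcases Set.mem_symmDiff.mp (hDsub hxD) with ⟨h1, _⟩ | ⟨h1, _⟩
              · exact absurd h1 hxZ
              · exact h1
          obtain ⟨S', hS', hdis', hU'⟩ := hbin Z D hZ (hS D hD)
          rcases S'.eq_empty_or_nonempty with rfl | ⟨D', hD'⟩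
          · simp only [Finset.notMem_empty, Set.iUnion_of_empty, Set.iUnion_empty] at hU'
            have hZD : Z = D := by
              have := symmDiff_eq_bot.mp (by rw [hU']; rfl)
              exact this
            obtain ⟨f, hfZ, hfC⟩ := hne
            have hfs : f ∈ symmDiff Z C := hDsub (hZD ▸ hfZ)
            rcases Set.mem_symmDiff.mp hfs with ⟨_, h2⟩ | ⟨_, h2⟩
            · exact h2 hfC
            · exact h2 hfZ
          · have hD'C : D' ⊆ C := by
              intro x hx
              apply hsub
              rw [hU']
              exact Set.mem_biUnion hD' hx
            have heq : D' = C := mcirc_eq_of_subset (hS' D' hD') hC hD'C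
            have hesym : e ∈ symmDiff Z D := by
              rw [hU']
              exact Set.mem_biUnion hD' (heq ▸ heC)
            rcases Set.mem_symmDiff.mp hesym with ⟨h1, _⟩ | ⟨h1, _⟩
            · exact heZ h1
            · exact heD h1
        · obtain ⟨x, hxZC, hxD⟩ := Set.not_subset.mp hZCD
          have hsub2 : D \ C ⊆ Z \ C := by
            intro y hy
            rcases Set.mem_symmDiff.mp (hDsub hy.1) with ⟨h1, h2⟩ | ⟨h1, h2⟩
            · exact ⟨h1, hy.2⟩
            · exact absurd h1 hy.2
          have hlt : (D \ C).ncard < (Z \ C).ncard := by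
            apply Set.ncard_lt_ncard _ (hZfin.subset Set.diff_subset)
            rw [Set.ssubset_def]
            exact ⟨hsub2, fun h => hxD (h hxZC).1⟩
          exact ih D C (hS D hD) heD hC heC hDCne (by omega)
      · exfalso
        rw [Set.not_nonempty_iff_eq_empty] at hDCne
        have hDZ : D ⊆ Z := by
          intro x hx
          rcases Set.mem_symmDiff.mp (hDsub hx) with ⟨h1, _⟩ | ⟨h1, _⟩
          · exact h1
          · exfalso
            have : x ∈ D ∩ C := ⟨hx, h1⟩
            rw [hDCne] at this
            exact this
        have hZD : D = Z := mcirc_eq_of_subset (hS D hD) hZ hDZ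
        obtain ⟨f, hfZ, hfC⟩ := hne
        have : f ∈ D ∩ C := ⟨hZD ▸ hfZ, hfC⟩
        rw [hDCne] at this
        exact this
lemma sum_indicator' (E : Finset α) (C : Set α) (hCE : C ⊆ ↑E) (hfin : C.Finite) :
    ∑ i ∈ E, Set.indicator C (1 : α → ZMod 2) i = (C.ncard : ZMod 2) := by
  classical
  have hsub : hfin.toFinset ⊆ E := by
    intro x hx
    exact hCE (hfin.mem_toFinset.mp hx)
  rw [← Finset.sum_subset hsub (by
    intro x _ hxC
    exact Set.indicator_of_notMem (fun h => hxC (hfin.mem_toFinset.mpr h)) _)]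
  have : ∀ i ∈ hfin.toFinset, Set.indicator C (1 : α → ZMod 2) i = 1 := by
    intro i hi
    rw [Set.indicator_of_mem (hfin.mem_toFinset.mp hi)]
    rfl
  rw [Finset.sum_congr rfl this, Finset.sum_const, Set.ncard_eq_toFinset_card C hfin]
  simp

end Aux

/-- in a connected binary matroid having at least one odd
circuit, every element lies in an odd circuit. -/
theorem stmt7 {α : Type*} (M : Matroid α) [M.Finite]
    (hconn : ConnectedM M) (hbin : BinaryM M)
    (hodd : ∃ C, MCircuit M C ∧ Odd C.ncard) :
    ∀ e ∈ M.E, ∃ C, MCircuit M C ∧ Odd C.ncard ∧ e ∈ C := by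
  classical
  intro e he
  by_contra hcon
  push_neg at hcon
  obtain ⟨D, hD, hDodd⟩ := hodd
  set E : Finset α := M.ground_finite.toFinset with hE
  set σ : (α → ZMod 2) →ₗ[ZMod 2] ZMod 2 := ∑ i ∈ E, LinearMap.proj i with hσ
  have hσ_eval : ∀ C : Set α, MCircuit M C →
      σ (Set.indicator C (1 : α → ZMod 2)) = (C.ncard : ZMod 2) := by
    intro C hC
    rw [hσ, LinearMap.sum_apply]
    simp only [LinearMap.proj_apply]
    refine sum_indicator' E C ?_ (mcirc_finite hC)
    intro x hx
    rw [hE, Set.Finite.coe_toFinset]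
    exact hC.1.subset_ground hx
  have hW : oddSp M e ≤ LinearMap.ker σ := by
    rw [oddSp, Submodule.span_le]
    rintro x ⟨C, hC, heC, rfl⟩
    have hev : ¬ Odd C.ncard := fun ho => (hcon C hC ho) heC
    rw [Nat.not_odd_iff_even] at hev
    obtain ⟨k, hk⟩ := hev
    rw [SetLike.mem_coe, LinearMap.mem_ker, hσ_eval C hC, hk]
    push_cast
    have h2 : (2 : ZMod 2) = 0 := by decide
    rw [← two_mul, h2, zero_mul]
  have hDmem : Set.indicator D (1 : α → ZMod 2) ∈ oddSp M e := by
    by_cases heD : e ∈ D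
    · exact Submodule.subset_span ⟨D, hD, heD, rfl⟩
    · obtain ⟨f, hf⟩ := mcirc_nonempty hD
      have hfE : f ∈ M.E := hD.1.subset_ground hf
      have hne : e ≠ f := fun h => heD (h ▸ hf)
      obtain ⟨C, hC, heC, hfC⟩ := hconn.2 e he f hfE hne
      exact key_span M hbin e (D \ C).ncard D C hD heD hC heC ⟨f, hf, hfC⟩ le_rfl
  have hker := hW hDmem
  rw [LinearMap.mem_ker, hσ_eval D hD] at hker
  obtain ⟨k, hk⟩ := hDodd
  rw [hk] at hker
  push_cast at hker
  have h2 : (2 : ZMod 2) = 0 := by decide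
  rw [h2, zero_mul, zero_add] at hker
  exact one_ne_zero hker
end

section
/- Let M be a connected binary matroid. Then the following are equivalent: (i) every circuit of M has even cardinality; (ii) some circuit basis of M consists only of even cycles; (iii) every cycle basis of M consists only of even cycles. -/
variable {α : Type*}

open scoped Matroid

lemma MCircuit.subset_ground' {M : Matroid α} {C : Set α} (h : MCircuit M C) : C ⊆ M.E :=
  h.1.subset_ground

lemma MCircuit.finite' {M : Matroid α} [M.Finite] {C : Set α} (h : MCircuit M C) : C.Finite :=
  M.ground_finite.subset h.subset_ground'

lemma MCircuit.isCycleM {M : Matroid α} {C : Set α} (h : MCircuit M C) : IsCycleM M C :=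
  ⟨{C}, by simp [h], by simp, by simp⟩

lemma IsCycleM.subset_ground' {M : Matroid α} {X : Set α} (h : IsCycleM M X) : X ⊆ M.E := by
  obtain ⟨S, hS, -, rfl⟩ := h
  exact Set.iUnion₂_subset fun C hC => (hS C hC).subset_ground'

lemma IsCycleM.finite' {M : Matroid α} [M.Finite] {X : Set α} (h : IsCycleM M X) : X.Finite :=
  M.ground_finite.subset h.subset_ground'

lemma even_biUnion' {S : Finset (Set α)} (hfin : ∀ C ∈ S, (C : Set α).Finite)
    (hdisj : (S : Set (Set α)).Pairwise Disjoint)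
    (heven : ∀ C ∈ S, Even (C : Set α).ncard) :
    Even (⋃ C ∈ S, C).ncard := by
  classical
  induction S using Finset.induction with
  | empty => simp
  | @insert a S haS ih =>
    rw [Finset.set_biUnion_insert]
    have hfinU : (⋃ C ∈ S, C).Finite :=
      Set.Finite.biUnion S.finite_toSet (fun C hC => hfin C (Finset.mem_insert_of_mem hC))
    have hdisjU : Disjoint a (⋃ C ∈ S, C) := by
      rw [Set.disjoint_iUnion₂_right]
      intro C hC
      refine hdisj (by simp) (by simp [hC]) ?_
      rintro rfl; exact haS hC
    rw [Set.ncard_union_eq hdisjU (hfin a (Finset.mem_insert_self a S)) hfinU]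
    exact (heven a (Finset.mem_insert_self a S)).add
      (ih (fun C hC => hfin C (Finset.mem_insert_of_mem hC))
        (hdisj.mono (by simp [Set.subset_insert]))
        (fun C hC => heven C (Finset.mem_insert_of_mem hC)))

lemma IsCycleM.even_ncard' {M : Matroid α} [M.Finite] {X : Set α} (h : IsCycleM M X)
    (hcirc : ∀ C, MCircuit M C → Even C.ncard) : Even X.ncard := by
  obtain ⟨S, hS, hdisj, rfl⟩ := h
  exact even_biUnion' (fun C hC => (hS C hC).finite') hdisj (fun C hC => hcirc C (hS C hC))

noncomputable def parityMapM (E : Finset α) : (α → ZMod 2) →ₗ[ZMod 2] ZMod 2 where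
  toFun x := ∑ a ∈ E, x a
  map_add' x y := by simp [Finset.sum_add_distrib]
  map_smul' c x := by simp [Finset.mul_sum]

lemma parityMapM_indicator (E : Finset α) {C : Set α} (hC : C ⊆ ↑E) (hfin : C.Finite) :
    parityMapM E (Set.indicator C (1 : α → ZMod 2)) = (C.ncard : ZMod 2) := by
  classical
  show ∑ a ∈ E, Set.indicator C (1 : α → ZMod 2) a = (C.ncard : ZMod 2)
  rw [Finset.sum_indicator_eq_sum_filter]
  have hfilter : E.filter (· ∈ C) = hfin.toFinset := by
    ext a
    simp only [Finset.mem_filter, Set.Finite.mem_toFinset]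
    exact ⟨fun h => h.2, fun h => ⟨hC h, h⟩⟩
  rw [hfilter, Set.ncard_eq_toFinset_card C hfin]
  simp only [Pi.one_apply, Finset.sum_const, nsmul_eq_mul, mul_one]

lemma even_iff_cast_zero (n : ℕ) : Even n ↔ (n : ZMod 2) = 0 := by
  rw [ZMod.natCast_eq_zero_iff, even_iff_two_dvd]

lemma indicatorM_injective :
    Function.Injective (fun C : Set α => Set.indicator C (1 : α → ZMod 2)) := by
  intro C D h
  ext a
  constructor <;> intro haC
  · by_contra haD
    have := congrFun h a
    simp [Set.indicator_of_mem haC, Set.indicator_of_notMem haD] at this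
  · by_contra haC'
    have := congrFun h a
    simp [Set.indicator_of_mem haC, Set.indicator_of_notMem haC'] at this

lemma even_circuit_of_even_basis {M : Matroid α} [M.Finite] {B : Finset (Set α)}
    (hB : IsCycleBasisM M B) (heven : ∀ C ∈ B, Even C.ncard)
    {C : Set α} (hC : MCircuit M C) : Even C.ncard := by
  classical
  set φ := parityMapM M.ground_finite.toFinset with hφ
  have hker : cycleSpaceM M ≤ LinearMap.ker φ := by
    rw [← hB.2.2]
    refine Submodule.span_le.2 ?_
    rintro x ⟨D, hD, rfl⟩
    have hcyc := hB.1 D hD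
    simp only [SetLike.mem_coe, LinearMap.mem_ker, hφ]
    rw [parityMapM_indicator _ (by simpa using hcyc.subset_ground') hcyc.finite']
    exact (even_iff_cast_zero _).1 (heven D hD)
  have hCmem : Set.indicator C (1 : α → ZMod 2) ∈ cycleSpaceM M :=
    Submodule.subset_span ⟨C, hC, rfl⟩
  have h0 := hker hCmem
  rw [LinearMap.mem_ker, hφ,
    parityMapM_indicator _ (by simpa using hC.subset_ground') hC.finite'] at h0
  exact (even_iff_cast_zero _).2 h0

theorem exists_circuit_basisM (M : Matroid α) [M.Finite] :
    ∃ B : Finset (Set α), IsCycleBasisM M B ∧ ∀ C ∈ B, MCircuit M C := by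
  classical
  obtain ⟨b, hbs, hspan, hli⟩ := exists_linearIndependent (ZMod 2)
    {x | ∃ C, MCircuit M C ∧ x = Set.indicator C (1 : α → ZMod 2)}
  have hcircfin : {C : Set α | MCircuit M C}.Finite :=
    (Set.Finite.finite_subsets M.ground_finite).subset (fun C hC => hC.subset_ground')
  have hBfin : {C : Set α | MCircuit M C ∧ Set.indicator C (1 : α → ZMod 2) ∈ b}.Finite :=
    hcircfin.subset (fun C hC => hC.1)
  have himg : (fun C => Set.indicator C (1 : α → ZMod 2)) '' ↑hBfin.toFinset = b := by
    rw [Set.Finite.coe_toFinset]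
    ext x
    constructor
    · rintro ⟨C, hC, rfl⟩; exact hC.2
    · intro hx
      obtain ⟨C, hC, rfl⟩ := hbs hx
      exact ⟨C, ⟨hC, hx⟩, rfl⟩
  refine ⟨hBfin.toFinset, ⟨?_, ?_, ?_⟩, ?_⟩
  · intro C hC
    rw [Set.Finite.mem_toFinset] at hC
    exact hC.1.isCycleM
  · have hmem : ∀ C : Set α, C ∈ hBfin.toFinset → Set.indicator C (1 : α → ZMod 2) ∈ b := by
      intro C hC
      rw [Set.Finite.mem_toFinset] at hC
      exact hC.2
    let f : hBfin.toFinset → b := fun C => ⟨Set.indicator C.1 (1 : α → ZMod 2), hmem C.1 C.2⟩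
    have hf : Function.Injective f := fun C D h =>
      Subtype.ext (indicatorM_injective (congrArg Subtype.val h))
    exact hli.comp f hf
  · rw [himg, hspan]; rfl
  · intro C hC
    rw [Set.Finite.mem_toFinset] at hC
    exact hC.1


set_option linter.unusedVariables false in
/-- for a connected binary matroid the following are equivalent:
(i) every circuit is even; (ii) some circuit basis consists of even cycles;
(iii) every cycle basis consists of even cycles. -/
theorem stmt8 {α : Type*} (M : Matroid α) [M.Finite]
    (hconn : ConnectedM M) (hbin : BinaryM M) :
    ((∀ C, MCircuit M C → Even C.ncard) ↔
      (∃ B : Finset (Set α), IsCycleBasisM M B ∧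
        (∀ C ∈ B, MCircuit M C) ∧ ∀ C ∈ B, Even C.ncard)) ∧
    ((∀ C, MCircuit M C → Even C.ncard) ↔
      (∀ B : Finset (Set α), IsCycleBasisM M B → ∀ C ∈ B, Even C.ncard)) := by
  obtain ⟨B₀, hB₀basis, hB₀circ⟩ := exists_circuit_basisM M
  constructor
  · constructor
    · intro hi
      exact ⟨B₀, hB₀basis, hB₀circ, fun C hC => hi C (hB₀circ C hC)⟩
    · rintro ⟨B, hBbasis, -, hBeven⟩ C hC
      exact even_circuit_of_even_basis hBbasis hBeven hC
  · constructor
    · intro hi B hB C hC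
      exact (hB.1 C hC).even_ncard' hi
    · intro h C hC
      exact even_circuit_of_even_basis hB₀basis (h B₀ hB₀basis) hC
end

section
/- A graph with at least 3 vertices has an ear-decomposition if and only if it is 2-connected. -/
open SimpleGraph

variable {V : Type*}

/-- A graph is 2-connected: connected, at least 3 vertices, and deleting any
vertex keeps it connected. -/
def TwoConnected (G : SimpleGraph V) : Prop :=
  G.Connected ∧ 3 ≤ Nat.card V ∧
    ∀ v : V, ((⊤ : G.Subgraph).deleteVerts {v}).coe.Connected

/-- A graph is non-bipartite iff it has an odd circuit. -/
def HasOddCircuit (G : SimpleGraph V) : Prop :=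
  ∃ (u : V) (c : G.Walk u u), c.IsCycle ∧ Odd c.length

/-- `G` contains a totally odd subdivision of `C3+` (triangle with a doubled
edge): equivalently, the union of an odd circuit and an odd path having exactly
its two distinct endpoints on the circuit. -/
def ContainsOddC3Plus (G : SimpleGraph V) : Prop :=
  ∃ (x : V) (c : G.Walk x x) (a b : V) (p : G.Walk a b),
    c.IsCycle ∧ Odd c.length ∧ p.IsPath ∧ Odd p.length ∧ a ≠ b ∧
    a ∈ c.support ∧ b ∈ c.support ∧
    ∀ w ∈ p.support, w ∈ c.support → w = a ∨ w = b

section Space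
variable [Fintype V] [DecidableEq V]

/-- `C` is the edge set of a circuit of `G`. -/
def IsCircuitSet (G : SimpleGraph V) (C : Finset (Sym2 V)) : Prop :=
  ∃ (u : V) (c : G.Walk u u), c.IsCycle ∧ C = c.edges.toFinset

/-- incidence vector over `𝔽₂` of a set of edges -/
def edgeInd (C : Finset (Sym2 V)) : Sym2 V → ZMod 2 :=
  fun e => if e ∈ C then 1 else 0

/-- the cycle space of `G`: the `𝔽₂`-span of incidence vectors of circuits -/
def cycleSpace (G : SimpleGraph V) : Submodule (ZMod 2) (Sym2 V → ZMod 2) :=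
  Submodule.span (ZMod 2) {x | ∃ C, IsCircuitSet G C ∧ x = edgeInd C}

/-- `C` is a cycle of `G` (an element of the cycle space). -/
def IsCycleSet (G : SimpleGraph V) (C : Finset (Sym2 V)) : Prop :=
  edgeInd C ∈ cycleSpace G

/-- `B` is a cycle basis of `G`: a family of cycles whose incidence vectors
form a basis of the cycle space. -/
def IsCycleBasis (G : SimpleGraph V) (B : Finset (Finset (Sym2 V))) : Prop :=
  (∀ C ∈ B, IsCycleSet G C) ∧
  LinearIndependent (ZMod 2) (fun C : B => edgeInd C.1) ∧
  Submodule.span (ZMod 2) (edgeInd '' (B : Set (Finset (Sym2 V)))) = cycleSpace G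

end Space

/-- data of a potential ear: two endpoints and a walk between them -/
abbrev EarData (G : SimpleGraph V) := Σ a : V, Σ b : V, G.Walk a b

/-- the union of a base circuit and a list of ears, as a subgraph -/
def earsUnion {G : SimpleGraph V} {x : V} (base : G.Walk x x)
    (ears : List (EarData G)) : G.Subgraph :=
  ears.foldl (fun H e => H ⊔ e.2.2.toSubgraph) base.toSubgraph

/-- `e` is an ear of the subgraph `H`: a path with exactly its two distinct
endpoints in `H`, all edges new. -/
def IsEar {G : SimpleGraph V} (H : G.Subgraph) (e : EarData G) : Prop :=
  e.2.2.IsPath ∧ e.1 ≠ e.2.1 ∧ e.1 ∈ H.verts ∧ e.2.1 ∈ H.verts ∧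
  (∀ v ∈ e.2.2.support, v ≠ e.1 → v ≠ e.2.1 → v ∉ H.verts) ∧
  ∀ ed ∈ e.2.2.edges, ed ∉ H.edgeSet

/-- an (open) ear-decomposition of `G` -/
structure EarDecomposition (G : SimpleGraph V) where
  x : V
  base : G.Walk x x
  base_cycle : base.IsCycle
  ears : List (EarData G)
  ear_cond : ∀ i (h : i < ears.length),
    IsEar (earsUnion base (ears.take i)) (ears.get ⟨i, h⟩)
  union_top : earsUnion base ears = ⊤

/-- an ear-decomposition is odd if the base circuit and all ears are odd -/
def EarDecomposition.IsOdd {G : SimpleGraph V} (ed : EarDecomposition G) : Prop :=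
  Odd ed.base.length ∧ ∀ e ∈ ed.ears, Odd e.2.2.length

/-- `G` is a totally odd subdivision of `K₄`. -/
def IsTotallyOddK4 (G : SimpleGraph V) : Prop :=
  ∃ (b : Fin 4 → V) (p : ∀ i j : Fin 4, i < j → G.Walk (b i) (b j)),
    Function.Injective b ∧
    (∀ i j h, (p i j h).IsPath ∧ Odd (p i j h).length) ∧
    (∀ i j h i' j' h', (i, j) ≠ (i', j') →
      ∀ v ∈ (p i j h).support, v ∈ (p i' j' h').support →
        (v = b i ∨ v = b j) ∧ (v = b i' ∨ v = b j')) ∧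
    (⨆ i, ⨆ j, ⨆ h : i < j, (p i j h).toSubgraph) = ⊤

/-- `G` contains a totally odd subdivision of `K₄` as a subgraph. -/
def ContainsTotallyOddK4 (G : SimpleGraph V) : Prop :=
  ∃ (b : Fin 4 → V) (p : ∀ i j : Fin 4, i < j → G.Walk (b i) (b j)),
    Function.Injective b ∧
    (∀ i j h, (p i j h).IsPath ∧ Odd (p i j h).length) ∧
    (∀ i j h i' j' h', (i, j) ≠ (i', j') →
      ∀ v ∈ (p i j h).support, v ∈ (p i' j' h').support →
        (v = b i ∨ v = b j) ∧ (v = b i' ∨ v = b j'))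

/-- `G` contains an odd theta subgraph through the vertex `w`: three pairwise
internally disjoint and edge-disjoint odd paths with the same distinct ends,
one of them passing through `w`. -/
def ContainsOddThetaThrough (G : SimpleGraph V) (w : V) : Prop :=
  ∃ (x y : V) (p1 p2 p3 : G.Walk x y), x ≠ y ∧
    p1.IsPath ∧ p2.IsPath ∧ p3.IsPath ∧
    Odd p1.length ∧ Odd p2.length ∧ Odd p3.length ∧
    (∀ v ∈ p1.support, v ∈ p2.support → v = x ∨ v = y) ∧
    (∀ v ∈ p1.support, v ∈ p3.support → v = x ∨ v = y) ∧
    (∀ v ∈ p2.support, v ∈ p3.support → v = x ∨ v = y) ∧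
    (∀ e ∈ p1.edges, e ∉ p2.edges) ∧
    (∀ e ∈ p1.edges, e ∉ p3.edges) ∧
    (∀ e ∈ p2.edges, e ∉ p3.edges) ∧
    (w ∈ p1.support ∨ w ∈ p2.support ∨ w ∈ p3.support)

/-- a graph is factor-critical if deleting any vertex leaves a graph with a
perfect matching -/
def FactorCritical {W : Type*} (H : SimpleGraph W) : Prop :=
  ∀ v : W, ∃ M : ((⊤ : H.Subgraph).deleteVerts {v}).coe.Subgraph,
    M.IsPerfectMatching

/-!
Adding an ear to a subgraph `H` that stays connected after deleting any vertex preserves this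
property: deleting an interior vertex of the ear cuts it into two paths, each still attached to
`H` at an endpoint, and deleting any other vertex leaves the ear attached to what remains of `H`
at a surviving endpoint. A circuit has the property, hence so does every graph with an
ear-decomposition.

Conversely, a 2-connected graph contains a circuit (an edge `ua` closed up by a path from `u` to
`a` through a third vertex, avoiding `a` then `u`), and every proper subgraph `H` with two vertices
has an ear: a missing edge between vertices of `H`, or an edge `xv` leaving `H` followed by a
path in `G - x` from `v` back to `H`. Each ear adds an edge, so the process stops at `G`.
-/

namespace SimpleGraph

variable {G : SimpleGraph V}

namespace Subgraph

lemma deleteVerts_sup (H K : G.Subgraph) (s : Set V) :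
    (H ⊔ K).deleteVerts s = H.deleteVerts s ⊔ K.deleteVerts s := by
  ext u v
  · simp [or_and_right]
  · simp only [induce_adj, sup_adj, verts_sup, Set.mem_sdiff, Set.mem_union]
    grind [Adj.fst_mem, Adj.snd_mem]

lemma deleteVerts_singleton_of_notMem {H : G.Subgraph} {v : V} (hv : v ∉ H.verts) :
    H.deleteVerts {v} = H := by
  rw [← deleteVerts_inter_verts_left_eq, Set.inter_singleton_eq_empty.mpr hv,
    deleteVerts_empty]

lemma deleteVerts_subgraphOfAdj_sup {u v : V} (huv : G.Adj u v) {K : G.Subgraph}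
    (hv : v ∈ K.verts) :
    (G.subgraphOfAdj huv ⊔ K).deleteVerts {u} = K.deleteVerts {u} := by
  ext a b
  · simp only [induce_verts, verts_sup, subgraphOfAdj_verts, Set.mem_sdiff, Set.mem_union,
      Set.mem_insert_iff, Set.mem_singleton_iff]
    grind
  · simp only [induce_adj, sup_adj, verts_sup, subgraphOfAdj_verts, subgraphOfAdj_adj,
      Set.mem_sdiff, Set.mem_union, Set.mem_insert_iff, Set.mem_singleton_iff, Sym2.eq_iff]
    grind [Adj.fst_mem, Adj.snd_mem]

lemma connected_sup_of_mem {H K : G.Subgraph} {u : V} (hH : H.Connected) (hK : K.Connected)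
    (huH : u ∈ H.verts) (huK : u ∈ K.verts) : (H ⊔ K).Connected :=
  connected_sup hH.preconnected hK.preconnected ⟨u, huH, huK⟩

def ConnectedNoCutVertex (H : G.Subgraph) : Prop :=
  H.Connected ∧ ∀ v, (H.deleteVerts {v}).Connected

end Subgraph

namespace Walk

lemma toSubgraph_cons_deleteVerts_start {u v w : V} (huv : G.Adj u v) (p : G.Walk v w)
    (hu : u ∉ p.support) : (cons huv p).toSubgraph.deleteVerts {u} = p.toSubgraph := by
  rw [Walk.toSubgraph, Subgraph.deleteVerts_subgraphOfAdj_sup huv p.start_mem_verts_toSubgraph,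
    Subgraph.deleteVerts_singleton_of_notMem (by rwa [mem_verts_toSubgraph])]

lemma IsPath.connected_toSubgraph_deleteVerts_start {u v : V} {p : G.Walk u v} (hp : p.IsPath)
    (huv : u ≠ v) : (p.toSubgraph.deleteVerts {u}).Connected := by
  cases p with
  | nil => exact absurd rfl huv
  | cons h q =>
    rw [toSubgraph_cons_deleteVerts_start h q ((cons_isPath_iff h q).mp hp).2]
    exact q.toSubgraph_connected

lemma IsPath.connected_toSubgraph_deleteVerts_end {u v : V} {p : G.Walk u v} (hp : p.IsPath)
    (huv : u ≠ v) : (p.toSubgraph.deleteVerts {v}).Connected := by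
  simpa using hp.reverse.connected_toSubgraph_deleteVerts_start huv.symm

lemma IsCycle.connected_toSubgraph_deleteVerts {u : V} {c : G.Walk u u} (hc : c.IsCycle)
    (v : V) : (c.toSubgraph.deleteVerts {v}).Connected := by
  classical
  by_cases hv : v ∈ c.support
  swap
  · rw [Subgraph.deleteVerts_singleton_of_notMem (by rwa [mem_verts_toSubgraph])]
    exact c.toSubgraph_connected
  rw [← c.toSubgraph_rotate hv]
  have hc' := hc.rotate hv
  generalize c.rotate v hv = c' at hc'
  cases c' with
  | nil => exact absurd hc' not_isCycle_nil
  | cons h q =>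
    rw [Walk.toSubgraph, Subgraph.deleteVerts_subgraphOfAdj_sup h q.start_mem_verts_toSubgraph]
    exact ((cons_isCycle_iff q h).mp hc').1.connected_toSubgraph_deleteVerts_end h.ne'

end Walk

open Walk in
lemma Subgraph.ConnectedNoCutVertex.sup_path {H : G.Subgraph} (hH : H.ConnectedNoCutVertex)
    {a b : V} {p : G.Walk a b} (hp : p.IsPath) (hab : a ≠ b) (ha : a ∈ H.verts)
    (hb : b ∈ H.verts) (hint : ∀ v ∈ p.support, v ≠ a → v ≠ b → v ∉ H.verts) :
    (H ⊔ p.toSubgraph).ConnectedNoCutVertex := by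
  classical
  refine ⟨connected_sup_of_mem hH.1 p.toSubgraph_connected ha p.start_mem_verts_toSubgraph,
    fun v => ?_⟩
  rw [deleteVerts_sup]
  by_cases hvp : v ∈ p.support
  swap
  · rw [p.toSubgraph.deleteVerts_singleton_of_notMem (by rwa [mem_verts_toSubgraph])]
    exact connected_sup_of_mem (hH.2 v) p.toSubgraph_connected (u := a)
      ⟨ha, fun h => hvp (h ▸ p.start_mem_support)⟩ p.start_mem_verts_toSubgraph
  by_cases hva : v = a
  · subst hva
    exact connected_sup_of_mem (hH.2 v) (hp.connected_toSubgraph_deleteVerts_start hab)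
      (u := b) ⟨hb, hab.symm⟩ ⟨p.end_mem_verts_toSubgraph, hab.symm⟩
  by_cases hvb : v = b
  · subst hvb
    exact connected_sup_of_mem (hH.2 v) (hp.connected_toSubgraph_deleteVerts_end hab)
      (u := a) ⟨ha, hab⟩ ⟨p.start_mem_verts_toSubgraph, hab⟩
  -- `v` is interior: it splits `p` into two paths, each attached to `H` at one end.
  rw [H.deleteVerts_singleton_of_notMem (hint v hvp hva hvb), ← p.take_spec hvp,
    toSubgraph_append, deleteVerts_sup, ← sup_assoc]
  have hfront := (hp.takeUntil hvp).connected_toSubgraph_deleteVerts_end (Ne.symm hva)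
  have hback := (hp.dropUntil hvp).connected_toSubgraph_deleteVerts_start hvb
  exact connected_sup_of_mem (connected_sup_of_mem hH.1 hfront ha
    ⟨start_mem_verts_toSubgraph _, Ne.symm hva⟩) hback (u := b) (Or.inl hb)
    ⟨end_mem_verts_toSubgraph _, Ne.symm hvb⟩

end SimpleGraph

section EarSequence

variable {G : SimpleGraph V} {x : V} (base : G.Walk x x)

def IsEarSequence (ears : List (EarData G)) : Prop :=
  ∀ i (h : i < ears.length), IsEar (earsUnion base (ears.take i)) (ears.get ⟨i, h⟩)

lemma earsUnion_append_singleton (ears : List (EarData G)) (e : EarData G) :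
    earsUnion base (ears ++ [e]) = earsUnion base ears ⊔ e.2.2.toSubgraph := by
  simp [earsUnion, List.foldl_append]

lemma toSubgraph_le_earsUnion (ears : List (EarData G)) :
    base.toSubgraph ≤ earsUnion base ears := by
  induction ears using List.reverseRecOn with
  | nil => exact le_rfl
  | append_singleton ears e ih =>
    rw [earsUnion_append_singleton]
    exact ih.trans le_sup_left

lemma isEarSequence_nil : IsEarSequence base [] := fun _ h => absurd h (Nat.not_lt_zero _)

lemma isEarSequence_append_singleton_iff {ears : List (EarData G)} {e : EarData G} :
    IsEarSequence base (ears ++ [e]) ↔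
      IsEarSequence base ears ∧ IsEar (earsUnion base ears) e := by
  simp only [IsEarSequence, List.length_append, List.length_singleton, List.get_eq_getElem]
  constructor
  · intro h
    refine ⟨fun i hi => ?_, ?_⟩
    · simpa [List.take_append_of_le_length hi.le, List.getElem_append_left hi]
        using h i (by omega)
    · simpa using h ears.length (by omega)
  · rintro ⟨h, he⟩ i hi
    rcases Nat.lt_succ_iff_lt_or_eq.mp hi with hi | rfl
    · simpa [List.take_append_of_le_length hi.le, List.getElem_append_left hi] using h i hi
    · simpa using he

lemma IsEarSequence.connectedNoCutVertex {base : G.Walk x x} (hb : base.IsCycle)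
    {ears : List (EarData G)} (h : IsEarSequence base ears) :
    (earsUnion base ears).ConnectedNoCutVertex := by
  induction ears using List.reverseRecOn with
  | nil => exact ⟨base.toSubgraph_connected, hb.connected_toSubgraph_deleteVerts⟩
  | append_singleton ears e ih =>
    obtain ⟨hears, hp, hab, ha, hb, hint, -⟩ := (isEarSequence_append_singleton_iff base).mp h
    rw [earsUnion_append_singleton]
    exact (ih hears).sup_path hp hab ha hb hint

end EarSequence

lemma EarDecomposition.twoConnected {G : SimpleGraph V} (ed : EarDecomposition G)
    (h3 : 3 ≤ Nat.card V) : TwoConnected G := by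
  have h : (earsUnion ed.base ed.ears).ConnectedNoCutVertex :=
    IsEarSequence.connectedNoCutVertex ed.base_cycle ed.ear_cond
  rw [ed.union_top] at h
  exact ⟨Subgraph.topIso.connected_iff.mp h.1.coe, h3, fun v => (h.2 v).coe⟩

lemma exists_ne_ne_of_three_le_natCard {α : Type*} (h : 3 ≤ Nat.card α) (a b : α) :
    ∃ c, c ≠ a ∧ c ≠ b := by
  have : Finite α := Nat.finite_of_card_ne_zero (by omega)
  by_contra! hc
  have hsub : (Set.univ : Set α) ⊆ {a, b} := fun c _ => by
    by_cases hca : c = a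
    · exact Or.inl hca
    · exact Or.inr (hc c hca)
  have := (Set.ncard_le_ncard hsub).trans (Set.ncard_insert_le a {b})
  rw [Set.ncard_univ, Set.ncard_singleton] at this
  omega

namespace SimpleGraph

variable {G : SimpleGraph V}

lemma exists_isPath_of_connected_deleteVerts {x u v : V}
    (h : ((⊤ : G.Subgraph).deleteVerts {x}).coe.Connected) (hu : u ≠ x) (hv : v ≠ x) :
    ∃ p : G.Walk u v, p.IsPath ∧ x ∉ p.support := by
  classical
  obtain ⟨q, hq⟩ := ((Subgraph.connected_iff_forall_exists_walk_subgraph _).mp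
    (Subgraph.connected_iff'.mpr h)).2 (u := u) (v := v) (by simp [hu]) (by simp [hv])
  refine ⟨q.bypass, q.bypass_isPath, fun hx => ?_⟩
  simpa using hq.1 ((Walk.mem_verts_toSubgraph q).mpr (q.support_bypass_subset_support hx))

lemma Walk.exists_eq_append_first_mem {S : Set V} {u v : V} (p : G.Walk u v) (hv : v ∈ S) :
    ∃ (z : V) (q : G.Walk u z) (r : G.Walk z v),
      p = q.append r ∧ z ∈ S ∧ ∀ w ∈ q.support, w ∈ S → w = z := by
  induction p with
  | nil => exact ⟨_, nil, nil, rfl, hv, by simp⟩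
  | @cons u c v h p ih =>
    by_cases hu : u ∈ S
    · exact ⟨u, nil, cons h p, rfl, hu, by simp⟩
    · obtain ⟨z, q, r, rfl, hz, hq⟩ := ih hv
      refine ⟨z, cons h q, r, rfl, hz, ?_⟩
      simp only [support_cons, List.mem_cons, forall_eq_or_imp]
      exact ⟨fun h' => absurd h' hu, hq⟩

end SimpleGraph

section ExistsEar

variable {G : SimpleGraph V}

lemma TwoConnected.exists_isCycle (h : TwoConnected G) :
    ∃ (u : V) (c : G.Walk u u), c.IsCycle := by
  classical
  obtain ⟨u⟩ := h.1.nonempty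
  obtain ⟨w, hwu, -⟩ := exists_ne_ne_of_three_le_natCard h.2.1 u u
  have : Nontrivial V := nontrivial_of_ne w u hwu
  obtain ⟨a, hua⟩ := h.1.preconnected.exists_adj_of_nontrivial u
  obtain ⟨w, hwu, hwa⟩ := exists_ne_ne_of_three_le_natCard h.2.1 u a
  obtain ⟨p, -, hap⟩ := exists_isPath_of_connected_deleteVerts (h.2.2 a) hua.ne hwa
  obtain ⟨q, -, huq⟩ := exists_isPath_of_connected_deleteVerts (h.2.2 u) hwu hua.ne'
  -- `p` avoids `a` and `q` avoids `u`, so neither uses the edge `ua`.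
  refine ⟨a, .cons hua.symm (p.append q).bypass,
    (Walk.cons_isCycle_iff _ _).mpr ⟨Walk.bypass_isPath _, fun hmem => ?_⟩⟩
  rcases List.mem_append.mp (Walk.edges_append p q ▸ (p.append q).edges_bypass_subset_edges hmem)
    with hp | hq
  · exact hap (p.fst_mem_support_of_mem_edges hp)
  · exact huq (q.snd_mem_support_of_mem_edges hq)

lemma isEar_toWalk {H : G.Subgraph} {u v : V} (huv : G.Adj u v) (hu : u ∈ H.verts)
    (hv : v ∈ H.verts) (hH : ¬ H.Adj u v) : IsEar H ⟨u, v, huv.toWalk⟩ :=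
  ⟨by simp [huv.ne], huv.ne, hu, hv, by simp +contextual, by simpa using hH⟩

lemma TwoConnected.exists_isEar_of_notMem (h2 : TwoConnected G) {H : G.Subgraph}
    {x₀ y₀ b : V} (hx₀ : x₀ ∈ H.verts) (hy₀ : y₀ ∈ H.verts) (hxy₀ : x₀ ≠ y₀)
    (hb : b ∉ H.verts) :
    ∃ e : EarData G, IsEar H e := by
  obtain ⟨⟨⟨x, v⟩, hxv⟩, -, hx, hv⟩ :=
    (h2.1.preconnected x₀ b).some.exists_boundary_dart _ hx₀ hb
  obtain ⟨y, hy, hyx⟩ : ∃ y ∈ H.verts, y ≠ x := by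
    by_cases h : x₀ = x
    · exact ⟨y₀, hy₀, h ▸ hxy₀.symm⟩
    · exact ⟨x₀, hx₀, h⟩
  obtain ⟨q, hq, hxq⟩ :=
    exists_isPath_of_connected_deleteVerts (h2.2.2 x) (fun h => hv (h ▸ hx)) hyx
  obtain ⟨z, p, r, rfl, hz, hpH⟩ := q.exists_eq_append_first_mem hy
  have hxp : x ∉ p.support := fun h => hxq ((p.mem_support_append_iff r).mpr (Or.inl h))
  refine ⟨⟨x, z, .cons hxv p⟩, (Walk.cons_isPath_iff _ _).mpr ⟨hq.of_append_left, hxp⟩,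
    fun h : x = z => hxp (h ▸ p.end_mem_support), hx, hz, ?_, ?_⟩
  · simp only [Walk.support_cons, List.mem_cons, forall_eq_or_imp, ne_eq, not_true_eq_false,
      false_imp_iff, true_and]
    exact fun w hw _ hwz hwH => hwz (hpH w hw hwH)
  · simp only [Walk.edges_cons, List.mem_cons, forall_eq_or_imp, Subgraph.mem_edgeSet]
    refine ⟨fun h => hv h.snd_mem, fun e he hH => ?_⟩
    induction e using Sym2.ind with
    | _ c d =>
      have hc := hpH c (p.fst_mem_support_of_mem_edges he) hH.fst_mem
      have hd := hpH d (p.snd_mem_support_of_mem_edges he) hH.snd_mem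
      exact hH.ne (hc.trans hd.symm)

lemma TwoConnected.exists_isEar (h2 : TwoConnected G) {H : G.Subgraph} (hH : H ≠ ⊤) {x y : V}
    (hx : x ∈ H.verts) (hy : y ∈ H.verts) (hxy : x ≠ y) : ∃ e : EarData G, IsEar H e := by
  by_cases hverts : H.verts = Set.univ
  · obtain ⟨u, v, huv, hHuv⟩ : ∃ u v, G.Adj u v ∧ ¬ H.Adj u v := by
      by_contra! h
      exact hH (le_antisymm le_top ⟨hverts.symm.le, fun u v huv => h u v huv⟩)
    exact ⟨_, isEar_toWalk huv (hverts ▸ trivial) (hverts ▸ trivial) hHuv⟩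
  · obtain ⟨b, hb⟩ := (Set.ne_univ_iff_exists_notMem _).mp hverts
    exact h2.exists_isEar_of_notMem hx hy hxy hb

lemma IsEar.ncard_edgeSet_diff_lt [Finite V] {H : G.Subgraph} {e : EarData G} (he : IsEar H e) :
    (G.edgeSet \ (H ⊔ e.2.2.toSubgraph).edgeSet).ncard < (G.edgeSet \ H.edgeSet).ncard := by
  obtain ⟨a, b, p⟩ := e
  obtain ⟨-, hab, -, -, -, hnew⟩ := he
  obtain ⟨d, hd⟩ : ∃ d, d ∈ p.edges := by
    cases p with
    | nil => exact absurd rfl hab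
    | cons h q => exact ⟨_, List.mem_cons_self⟩
  refine Set.ncard_lt_ncard ((Set.ssubset_iff_of_subset
    (Set.sdiff_subset_sdiff_right (Subgraph.edgeSet_mono le_sup_left))).mpr
    ⟨d, ⟨p.edges_subset_edgeSet hd, hnew d hd⟩, fun h => h.2 ?_⟩)
  rw [Subgraph.edgeSet_sup, Walk.edgeSet_toSubgraph]
  exact Or.inr hd

end ExistsEar

theorem TwoConnected.nonempty_earDecomposition {G : SimpleGraph V} (h2 : TwoConnected G)
    {x : V} {base : G.Walk x x} (hb : base.IsCycle) (ears : List (EarData G))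
    (hears : IsEarSequence base ears) : Nonempty (EarDecomposition G) := by
  by_cases htop : earsUnion base ears = ⊤
  · exact ⟨⟨x, base, hb, ears, hears, htop⟩⟩
  have hadj := (toSubgraph_le_earsUnion base ears).2 (base.toSubgraph_adj_snd hb.not_nil)
  obtain ⟨e, he⟩ := h2.exists_isEar htop hadj.fst_mem hadj.snd_mem hadj.ne
  exact h2.nonempty_earDecomposition hb (ears ++ [e])
    ((isEarSequence_append_singleton_iff base).mpr ⟨hears, he⟩)
termination_by (G.edgeSet \ (earsUnion base ears).edgeSet).ncard
decreasing_by
  have : Finite V := Nat.finite_of_card_ne_zero (by have := h2.2.1; omega)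
  rw [earsUnion_append_singleton]
  exact he.ncard_edgeSet_diff_lt

theorem stmt11_general {V : Type*} (G : SimpleGraph V)
    (h3 : 3 ≤ Nat.card V) :
    Nonempty (EarDecomposition G) ↔ TwoConnected G := by
  refine ⟨fun ⟨ed⟩ => ed.twoConnected h3, fun h2 => ?_⟩
  obtain ⟨u, c, hc⟩ := h2.exists_isCycle
  exact h2.nonempty_earDecomposition hc [] (isEarSequence_nil c)

/-- a graph with at least 3 vertices has an ear-decomposition
iff it is 2-connected. -/
theorem stmt11 {V : Type*} [Fintype V] (G : SimpleGraph V)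
    (h3 : 3 ≤ Nat.card V) :
    Nonempty (EarDecomposition G) ↔ TwoConnected G :=
  stmt11_general G h3
end

section
/- If G is a 2-connected non-bipartite graph, then for every pair of distinct vertices u, v of G there exist both an odd u-v path and an even u-v path in G. -/
open SimpleGraph

variable {V : Type*}

/-!
Call `S` both-parity linked if any two distinct vertices of `S` are joined by two paths inside
`S` whose lengths have opposite parities. The vertex set of an odd circuit is such a set. If `e`
is an ear of such an `S` (a path between two distinct vertices of `S` meeting `S` only in its
ends), then `S ∪ e` is again one: a vertex of `e` runs along `e` to the end of `e` other than its
target and continues with the two paths from there, and two vertices of `e` are joined through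
both ends of `e`. By 2-connectivity, a proper subset with two vertices has an ear through a new
vertex (an edge `a y` leaving `S`, then a path from `y` back to `S` in `G - a`), so a maximal
both-parity linked set containing an odd circuit is the whole vertex set.
-/

namespace SimpleGraph.Walk

variable {G : SimpleGraph V} {u v w x : V}

lemma IsPath.eq_of_mem_support_append {p : G.Walk u v} {q : G.Walk v w}
    (hpq : (p.append q).IsPath) (hp : x ∈ p.support) (hq : x ∈ q.support) : x = v := by
  by_contra hxv
  exact hpq.ne_of_mem_support_of_append hxv hp hq rfl

lemma IsPath.append_of_support_inter {p : G.Walk u v} {q : G.Walk v w}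
    (hp : p.IsPath) (hq : q.IsPath) (hpq : ∀ x ∈ p.support, x ∈ q.support → x = v) :
    (p.append q).IsPath := by
  rw [isPath_def, support_append]
  refine hp.support_nodup.append hq.support_nodup.tail fun x hxp hxq => ?_
  obtain rfl := hpq x hxp (List.mem_of_mem_tail hxq)
  exact (List.nodup_cons.mp (q.cons_tail_support ▸ hq.support_nodup)).1 hxq

lemma exists_walk_to_first_mem {S : Set V} (p : G.Walk u v) (hv : v ∈ S) :
    ∃ b ∈ S, ∃ q : G.Walk u b, (∀ x ∈ q.support, x ∈ S → x = b) ∧ q.support ⊆ p.support := by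
  induction p with
  | nil => exact ⟨_, hv, nil, by simp, by simp⟩
  | @cons u w v h p ih =>
    by_cases hu : u ∈ S
    · exact ⟨u, hu, nil, by simp, by simp⟩
    obtain ⟨b, hb, q, hqS, hqp⟩ := ih hv
    refine ⟨b, hb, cons h q, ?_, List.cons_subset_cons _ hqp⟩
    simp only [support_cons, List.mem_cons, forall_eq_or_imp]
    exact ⟨fun hu' => absurd hu' hu, hqS⟩

end SimpleGraph.Walk

namespace SimpleGraph

variable {G : SimpleGraph V} {S T : Set V} {a b c u v w : V}

lemma exists_walk_avoiding (h : ((⊤ : G.Subgraph).deleteVerts {a}).coe.Connected)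
    (hu : u ≠ a) (hv : v ≠ a) : ∃ p : G.Walk u v, a ∉ p.support := by
  obtain ⟨p⟩ := h.preconnected ⟨u, by simpa using hu⟩ ⟨v, by simpa using hv⟩
  have hpa : ∀ x ∈ (p.map (Subgraph.hom _)).support, x ≠ a := by
    simp only [Walk.support_map, List.mem_map]
    rintro _ ⟨x, -, rfl⟩
    simpa using x.2
  exact ⟨p.map (Subgraph.hom _), fun ha => hpa a ha rfl⟩

def BothParityLinked (G : SimpleGraph V) (S : Set V) (u v : V) : Prop :=
  ∃ p q : G.Walk u v, p.IsPath ∧ q.IsPath ∧ Odd (p.length + q.length) ∧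
    (∀ x ∈ p.support, x ∈ S) ∧ ∀ x ∈ q.support, x ∈ S

def BothParityLinkedOn (G : SimpleGraph V) (S : Set V) : Prop :=
  ∀ u ∈ S, ∀ v ∈ S, u ≠ v → G.BothParityLinked S u v

lemma BothParityLinked.mono (h : G.BothParityLinked S u v) (hST : S ⊆ T) :
    G.BothParityLinked T u v := by
  obtain ⟨p, q, hp, hq, hpq, hpS, hqS⟩ := h
  exact ⟨p, q, hp, hq, hpq, fun x hx => hST (hpS x hx), fun x hx => hST (hqS x hx)⟩

lemma BothParityLinked.symm (h : G.BothParityLinked S u v) : G.BothParityLinked S v u := by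
  obtain ⟨p, q, hp, hq, hpq, hpS, hqS⟩ := h
  exact ⟨p.reverse, q.reverse, hp.reverse, hq.reverse, by simpa using hpq,
    by simpa using hpS, by simpa using hqS⟩

lemma BothParityLinked.append_left (h : G.BothParityLinked S c v) {r : G.Walk u c}
    (hr : r.IsPath) (hrS : ∀ x ∈ r.support, x ∈ S → x = c) (hrT : ∀ x ∈ r.support, x ∈ T)
    (hST : S ⊆ T) : G.BothParityLinked T u v := by
  obtain ⟨p, q, hp, hq, hpq, hpS, hqS⟩ := h
  refine ⟨r.append p, r.append q,
    hr.append_of_support_inter hp fun x hx hxp => hrS x hx (hpS x hxp),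
    hr.append_of_support_inter hq fun x hx hxq => hrS x hx (hqS x hxq), ?_, ?_, ?_⟩
  · rw [Walk.length_append, Walk.length_append,
      show r.length + p.length + (r.length + q.length) = p.length + q.length + 2 * r.length by ring]
    exact hpq.add_even (even_two_mul _)
  all_goals
    simp only [Walk.mem_support_append_iff]
    rintro x (hx | hx)
  exacts [hrT x hx, hST (hpS x hx), hrT x hx, hST (hqS x hx)]

lemma BothParityLinked.append_right (h : G.BothParityLinked S u c) {r : G.Walk c v}
    (hr : r.IsPath) (hrS : ∀ x ∈ r.support, x ∈ S → x = c) (hrT : ∀ x ∈ r.support, x ∈ T)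
    (hST : S ⊆ T) : G.BothParityLinked T u v :=
  (h.symm.append_left hr.reverse (by simpa using hrS) (by simpa using hrT) hST).symm

lemma bothParityLinkedOn_of_isCycle {c : G.Walk w w} (hc : c.IsCycle) (hodd : Odd c.length) :
    G.BothParityLinkedOn {x | x ∈ c.support} := by
  classical
  intro u hu v hv huv
  have hc' : (c.rotate u hu).IsCycle := hc.rotate hu
  obtain ⟨t, d, htd⟩ := Walk.mem_support_iff_exists_append.mp
    ((Walk.mem_support_rotate_iff c u hu).mpr hv)
  rw [htd] at hc'
  refine ⟨t, d.reverse, hc'.isPath_of_append_left (Walk.not_nil_of_ne huv.symm),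
    (hc'.isPath_of_append_right (Walk.not_nil_of_ne huv)).reverse, ?_, ?_, ?_⟩
  · rwa [Walk.length_reverse, ← Walk.length_append, ← htd, Walk.length_rotate]
  all_goals
    intro x hx
    rw [Set.mem_ofPred_eq, ← Walk.mem_support_rotate_iff c u hu, htd, Walk.mem_support_append_iff]
  · exact Or.inl hx
  · exact Or.inr (by simpa using hx)

/-- `u` is an inner vertex of the ear `t.append d`; the remaining positions of `v` reduce to this
case by reversing the ear. -/
lemma BothParityLinkedOn.linked_of_append (hS : G.BothParityLinkedOn S) {t : G.Walk a u}
    {d : G.Walk u b} (he : (t.append d).IsPath) (hab : a ≠ b) (ha : a ∈ S) (hb : b ∈ S)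
    (heS : ∀ x ∈ (t.append d).support, x ∈ S → x = a ∨ x = b) (hu : u ∉ S)
    (hv : v ∈ S ∨ v ∈ t.support) (hvu : v ≠ u) (hvb : v ≠ b) :
    G.BothParityLinked (S ∪ {x | x ∈ (t.append d).support}) u v := by
  have hd : d.IsPath := he.of_append_right
  have hdS : ∀ x ∈ d.support, x ∈ S → x = b := by
    intro x hx hxS
    refine (heS x (Walk.mem_support_append_iff _ _ |>.mpr (Or.inr hx)) hxS).resolve_left ?_
    rintro rfl
    exact hu (he.eq_of_mem_support_append t.start_mem_support hx ▸ hxS)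
  have hdT : ∀ x ∈ d.support, x ∈ S ∪ {x | x ∈ (t.append d).support} := by
    simp +contextual [Walk.mem_support_append_iff]
  rcases hv with hvS | hvt
  · exact (hS b hb v hvS hvb.symm).append_left hd hdS hdT Set.subset_union_left
  obtain ⟨t₁, t₂, ht₁, -, rfl⟩ := he.of_append_left.mem_support_iff_exists_append.mp hvt
  have ht₁t : ∀ x ∈ t₁.support, x ∈ (t₁.append t₂).support := fun x hx =>
    (Walk.mem_support_append_iff _ _).mpr (Or.inl hx)
  have ht₁S : ∀ x ∈ t₁.support, x ∈ S → x = a := by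
    intro x hx hxS
    refine (heS x ((Walk.mem_support_append_iff _ _).mpr (.inl (ht₁t x hx))) hxS).resolve_right ?_
    rintro rfl
    exact hu (he.eq_of_mem_support_append (ht₁t x hx) d.end_mem_support ▸ hxS)
  have hb_v : G.BothParityLinked (S ∪ {x | x ∈ t₁.support}) b v :=
    (hS b hb a ha hab.symm).append_right ht₁ ht₁S (fun x hx => Or.inr hx) Set.subset_union_left
  refine hb_v.append_left hd ?_ hdT <| Set.union_subset_union_right _ fun x hx =>
    (Walk.mem_support_append_iff _ _).mpr (.inl (ht₁t x hx))
  rintro x hx (hxS | hxt₁)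
  · exact hdS x hx hxS
  · obtain rfl := he.eq_of_mem_support_append (ht₁t x hxt₁) hx
    exact absurd (he.of_append_left.eq_of_mem_support_append hxt₁ t₂.end_mem_support) hvu.symm

lemma BothParityLinkedOn.union_ear (hS : G.BothParityLinkedOn S) {e : G.Walk a b}
    (he : e.IsPath) (hab : a ≠ b) (ha : a ∈ S) (hb : b ∈ S)
    (heS : ∀ x ∈ e.support, x ∈ S → x = a ∨ x = b) :
    G.BothParityLinkedOn (S ∪ {x | x ∈ e.support}) := by
  have hinner : ∀ u ∈ e.support, u ∉ S → ∀ v ∈ S ∪ {x | x ∈ e.support}, v ≠ u →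
      G.BothParityLinked (S ∪ {x | x ∈ e.support}) u v := by
    intro u hu huS v hv hvu
    obtain ⟨t, d, -, -, rfl⟩ := he.mem_support_iff_exists_append.mp hu
    by_cases hfwd : v ≠ b ∧ (v ∈ S ∨ v ∈ t.support)
    · exact hS.linked_of_append he hab ha hb heS huS hfwd.2 hvu hfwd.1
    have hrev : (d.reverse.append t.reverse).support = (t.append d).support.reverse := by
      rw [← Walk.reverse_append, Walk.support_reverse]
    have hbwd : v = b ∨ v ∉ S ∧ v ∉ t.support := by tauto
    have hv' : v ∈ S ∨ v ∈ d.reverse.support := by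
      rcases hbwd with rfl | ⟨hvS, hvt⟩
      · exact .inl hb
      · simpa [hvS, hvt, Walk.mem_support_append_iff] using hv
    have hva : v ≠ a := by
      rcases hbwd with rfl | ⟨-, hvt⟩
      · exact hab.symm
      · exact (ne_of_mem_of_not_mem t.start_mem_support hvt).symm
    simpa [hrev] using hS.linked_of_append (t := d.reverse) (d := t.reverse)
      (by rwa [← Walk.reverse_append, Walk.isPath_reverse_iff]) hab.symm hb ha
      (by simpa [hrev, or_comm] using heS) huS hv' hvu hva
  intro u hu v hv huv
  by_cases huS : u ∈ S
  · by_cases hvS : v ∈ S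
    · exact (hS u huS v hvS huv).mono Set.subset_union_left
    · exact (hinner v (hv.resolve_left hvS) hvS u hu huv).symm
  · exact hinner u (hu.resolve_left huS) huS v hv huv.symm

lemma exists_ear (hconn : G.Connected)
    (hdel : ∀ w : V, ((⊤ : G.Subgraph).deleteVerts {w}).coe.Connected)
    {s₀ s₁ : V} (hs₀ : s₀ ∈ S) (hs₁ : s₁ ∈ S) (hs : s₀ ≠ s₁) (hSV : S ≠ Set.univ) :
    ∃ a b, ∃ e : G.Walk a b, e.IsPath ∧ a ≠ b ∧ a ∈ S ∧ b ∈ S ∧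
      (∀ x ∈ e.support, x ∈ S → x = a ∨ x = b) ∧ ∃ x ∈ e.support, x ∉ S := by
  classical
  obtain ⟨v₀, hv₀⟩ := (Set.ne_univ_iff_exists_notMem S).mp hSV
  obtain ⟨⟨⟨a, y⟩, hay⟩, -, ha, hy⟩ :=
    (hconn.preconnected s₀ v₀).some.exists_boundary_dart S hs₀ hv₀
  obtain ⟨s, hsS, hsa⟩ : ∃ s ∈ S, s ≠ a := by
    by_cases h : s₀ = a
    · exact ⟨s₁, hs₁, h ▸ hs.symm⟩
    · exact ⟨s₀, hs₀, h⟩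
  obtain ⟨W, haW⟩ := exists_walk_avoiding (hdel a) (fun h => hy (h ▸ ha)) hsa
  obtain ⟨b, hb, q, hqS, hqW⟩ := W.exists_walk_to_first_mem hsS
  have haq : a ∉ q.bypass.support := fun h => haW (hqW (q.support_bypass_subset_support h))
  refine ⟨a, b, .cons hay q.bypass, q.bypass_isPath.cons haq,
    fun hab => haq (hab ▸ q.bypass.end_mem_support), ha, hb, ?_, y, by simp, hy⟩
  simp only [Walk.support_cons, List.mem_cons, forall_eq_or_imp, true_or, implies_true, true_and]
  exact fun x hx hxS => .inr (hqS x (q.support_bypass_subset_support hx) hxS)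

lemma bothParityLinkedOn_univ [Finite V] (hconn : G.Connected)
    (hdel : ∀ w : V, ((⊤ : G.Subgraph).deleteVerts {w}).coe.Connected)
    (hS : G.BothParityLinkedOn S) {s₀ s₁ : V} (hs₀ : s₀ ∈ S) (hs₁ : s₁ ∈ S) (hs : s₀ ≠ s₁) :
    G.BothParityLinkedOn Set.univ := by
  obtain ⟨T, hST, hT⟩ := Finite.exists_le_maximal (p := G.BothParityLinkedOn) hS
  suffices hTV : T = Set.univ from hTV ▸ hT.prop
  by_contra hTV
  obtain ⟨a, b, e, he, hab, ha, hb, heT, x, hxe, hxT⟩ :=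
    exists_ear hconn hdel (hST hs₀) (hST hs₁) hs hTV
  exact hxT (hT.2 (hT.prop.union_ear he hab ha hb heT) Set.subset_union_left (.inr hxe))

end SimpleGraph

/-- in a 2-connected non-bipartite graph there exist both an odd
and an even path between any two distinct vertices. -/
theorem stmt12 {V : Type*} [Fintype V] (G : SimpleGraph V)
    (hG : TwoConnected G) (hnb : HasOddCircuit G) (u v : V) (huv : u ≠ v) :
    (∃ p : G.Walk u v, p.IsPath ∧ Odd p.length) ∧
    (∃ p : G.Walk u v, p.IsPath ∧ Even p.length) := by
  obtain ⟨hconn, -, hdel⟩ := hG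
  obtain ⟨w, c, hc, hodd⟩ := hnb
  have hsnd : G.Adj w c.snd := c.adj_snd hc.not_nil
  have hlinked := bothParityLinkedOn_univ hconn hdel (bothParityLinkedOn_of_isCycle hc hodd)
    c.start_mem_support (List.mem_of_mem_tail (c.snd_mem_tail_support hc.not_nil)) hsnd.ne
  obtain ⟨p, q, hp, hq, hpq, -, -⟩ := hlinked u trivial v trivial huv
  rcases Nat.even_or_odd p.length with hpe | hpo
  · exact ⟨⟨q, hq, (Nat.odd_add'.mp hpq).mpr hpe⟩, ⟨p, hp, hpe⟩⟩
  · exact ⟨⟨p, hp, hpo⟩, ⟨q, hq, (Nat.odd_add.mp hpq).mp hpo⟩⟩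
end

section
/- Let G be a graph and u, v vertices of G. There exists an even u-v path of length at least 4 in G if and only if there exists a neighbor a of u such that the graph obtained from G by deleting u and all edges between a and v contains an odd a-v path. -/
open SimpleGraph

variable {V : Type*}

/-! An even `u`-`v` path of length at least 4 is an edge `ua` followed by an odd `a`-`v` path
avoiding `u` of length at least 3, and an odd `a`-`v` path has length 1 exactly when it uses
the edge `av`. -/

namespace SimpleGraph.Walk

variable {W : Type*} {G : SimpleGraph W} {x y : W}

theorem mk_mem_edges_of_length_eq_one : ∀ {p : G.Walk x y}, p.length = 1 → s(x, y) ∈ p.edges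
  | cons _ nil, _ => by simp

theorem IsPath.mk_mem_edges_iff_length_eq_one {p : G.Walk x y} (hp : p.IsPath) :
    s(x, y) ∈ p.edges ↔ p.length = 1 :=
  ⟨hp.length_eq_one_of_mem_edges, mk_mem_edges_of_length_eq_one⟩

end SimpleGraph.Walk

theorem stmt13_general {V : Type*} (G : SimpleGraph V)
    (u v : V) :
    (∃ p : G.Walk u v, p.IsPath ∧ Even p.length ∧ 4 ≤ p.length) ↔
    (∃ a : V, G.Adj u a ∧ ∃ q : G.Walk a v, q.IsPath ∧ Odd q.length ∧
      u ∉ q.support ∧ s(a, v) ∉ q.edges) := by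
  constructor
  · rintro ⟨_ | ⟨hua, q⟩, hp, heven, hlen⟩
    · simp at hlen
    · rw [Walk.cons_isPath_iff] at hp
      rw [Walk.length_cons] at heven hlen
      refine ⟨_, hua, q, hp.1, Nat.not_even_iff_odd.mp (Nat.even_add_one.mp heven), hp.2, ?_⟩
      rw [hp.1.mk_mem_edges_iff_length_eq_one]
      omega
  · rintro ⟨a, hua, q, hq, hodd, hu, hav⟩
    rw [hq.mk_mem_edges_iff_length_eq_one] at hav
    refine ⟨.cons hua q, (Walk.cons_isPath_iff hua q).mpr ⟨hq, hu⟩, ?_, ?_⟩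
    · rw [Walk.length_cons, Nat.even_add_one, Nat.not_even_iff_odd]
      exact hodd
    · obtain ⟨k, hk⟩ := hodd
      rw [Walk.length_cons]
      omega

/-- there is an even `u`-`v` path of length at least 4 iff there
is a neighbor `a` of `u` and an odd `a`-`v` path in the graph obtained by
deleting `u` and all edges between `a` and `v`. -/
theorem stmt13 {V : Type*} [Fintype V] [DecidableEq V] (G : SimpleGraph V)
    (u v : V) :
    (∃ p : G.Walk u v, p.IsPath ∧ Even p.length ∧ 4 ≤ p.length) ↔
    (∃ a : V, G.Adj u a ∧ ∃ q : G.Walk a v, q.IsPath ∧ Odd q.length ∧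
      u ∉ q.support ∧ s(a, v) ∉ q.edges) :=
  stmt13_general G u v
end

section
/- Let G be a 2-connected bipartite graph and H a 2-connected subgraph of G that has an odd ear in G. Then every vertex of G belongs to an odd theta subgraph of G. -/
open SimpleGraph

variable {V : Type*}

/-!
Two internally disjoint paths of `H` between the ends of the ear (Whitney's theorem for the
2-connected graph `H`) form, together with the ear, a theta. In the bipartite graph `G` the parity
of a walk is read off a 2-colouring of its ends, so a theta is odd iff its ends have different
colours, as the ends of the odd ear do. A vertex `w` off the theta lies, by the fan lemma, on an
ear `Q` of the theta. If both ends of `Q` lie on one path of the theta, `Q` replaces the segment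
between them. Otherwise the theta and `Q` form a subdivided `K₄` on the ends `x, y` of the theta
and the ends `u, v` of `Q`; it contains thetas through `Q` with ends `{u, v}`, `{u, x}` and
`{u, y}`, and the ends of one of them have different colours.
-/

namespace SimpleGraph

variable {W : Type*} {Γ : SimpleGraph W}

namespace Walk

variable {x y u v z : W}

def InternallyDisjoint (p q : Γ.Walk x y) : Prop :=
  ∀ z ∈ p.support, z ∈ q.support → z = x ∨ z = y

theorem InternallyDisjoint.symm {p q : Γ.Walk x y} (h : p.InternallyDisjoint q) :
    q.InternallyDisjoint p :=
  fun z hq hp => h z hp hq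

theorem InternallyDisjoint.map {W' : Type*} {Γ' : SimpleGraph W'} {f : Γ →g Γ'}
    (hf : Function.Injective f) {p q : Γ.Walk x y} (h : p.InternallyDisjoint q) :
    (p.map f).InternallyDisjoint (q.map f) := by
  intro z hp hq
  simp only [support_map, List.mem_map] at hp hq
  obtain ⟨z, hz, rfl⟩ := hp
  obtain ⟨z', hz', hzz'⟩ := hq
  obtain rfl := hf hzz'
  exact (h _ hz hz').imp (congrArg f) (congrArg f)

theorem InternallyDisjoint.notMem_edges {p q : Γ.Walk x y} (h : p.InternallyDisjoint q)
    (hp : p.IsPath) (hq : q.IsPath) (hl : 1 < p.length ∨ 1 < q.length) :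
    ∀ e ∈ p.edges, e ∉ q.edges := by
  intro e hep heq
  induction e using Sym2.ind with | _ c d =>
  have hcd := (p.adj_of_mem_edges hep).ne
  have hc := h c (p.fst_mem_support_of_mem_edges hep) (q.fst_mem_support_of_mem_edges heq)
  have hd := h d (p.snd_mem_support_of_mem_edges hep) (q.snd_mem_support_of_mem_edges heq)
  have hxy : s(c, d) = s(x, y) := by
    rcases hc with rfl | rfl <;> rcases hd with rfl | rfl <;> simp_all [Sym2.eq_swap]
  rw [hxy] at hep heq
  have := hp.length_eq_one_of_mem_edges hep
  have := hq.length_eq_one_of_mem_edges heq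
  omega

theorem IsPath.append_of_inter {p : Γ.Walk x y} {q : Γ.Walk y z} (hp : p.IsPath) (hq : q.IsPath)
    (h : ∀ v ∈ p.support, v ∈ q.support → v = y) : (p.append q).IsPath := by
  rw [isPath_def, support_append, List.nodup_append]
  refine ⟨hp.support_nodup, hq.support_nodup.sublist q.support.tail_sublist, ?_⟩
  rintro a ha _ hb rfl
  obtain rfl := h a ha (List.mem_of_mem_tail hb)
  have := hq.support_nodup
  rw [← cons_tail_support, List.nodup_cons] at this
  exact this.1 hb

theorem one_lt_length_of_mem {p : Γ.Walk x y} (hz : z ∈ p.support) (hzx : z ≠ x)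
    (hzy : z ≠ y) : 1 < p.length := by
  rcases p with _ | ⟨h, _ | _⟩ <;> simp_all

theorem one_lt_length_of_notMem_edges {p : Γ.Walk x y} (hxy : x ≠ y) (h : s(x, y) ∉ p.edges) :
    1 < p.length := by
  rcases p with _ | ⟨h, _ | _⟩ <;> simp_all

theorem exists_eq_append_of_end_mem (S : Set W) (p : Γ.Walk x y) (hy : y ∈ S) :
    ∃ z ∈ S, ∃ (q : Γ.Walk x z) (r : Γ.Walk z y), p = q.append r ∧
      ∀ v ∈ q.support, v ∈ S → v = z := by
  induction p with
  | nil => exact ⟨_, hy, nil, nil, rfl, by simp⟩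
  | @cons x x' y h p ih =>
    by_cases hx : x ∈ S
    · exact ⟨x, hx, nil, cons h p, rfl, by simp⟩
    · obtain ⟨z, hz, q, r, rfl, hq⟩ := ih hy
      exact ⟨z, hz, cons h q, r, rfl, by grind [support_cons]⟩

section DecidableEq

variable [DecidableEq W]

theorem IsPath.eq_of_mem_takeUntil_of_mem_dropUntil {p : Γ.Walk x y} (hp : p.IsPath)
    (hu : u ∈ p.support) :
    ∀ z ∈ (p.takeUntil u hu).support, z ∈ (p.dropUntil u hu).support → z = u := by
  intro z hz hz'
  have := (p.take_spec hu ▸ hp).support_nodup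
  rw [support_append, List.nodup_append] at this
  rw [← cons_tail_support, List.mem_cons] at hz'
  exact hz'.resolve_right fun h => this.2.2 z hz z h rfl

theorem IsPath.start_notMem_dropUntil {p : Γ.Walk x y} (hp : p.IsPath)
    (hu : u ∈ p.support) (hux : u ≠ x) : x ∉ (p.dropUntil u hu).support :=
  fun h => hux (hp.eq_of_mem_takeUntil_of_mem_dropUntil hu _ (start_mem_support _) h).symm

theorem mem_dropUntil_or_mem_dropUntil (p : Γ.Walk x y) (hu : u ∈ p.support)
    (hv : v ∈ p.support) : v ∈ (p.dropUntil u hu).support ∨ u ∈ (p.dropUntil v hv).support := by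
  induction p with
  | nil =>
    simp only [support_nil, List.mem_singleton] at hu hv
    subst hu hv
    simp
  | @cons x x' y h p ih =>
    by_cases hxu : x = u
    · subst hxu; exact .inl (by rwa [dropUntil_first])
    by_cases hxv : x = v
    · subst hxv; exact .inr (by rwa [dropUntil_first])
    simp only [support_cons, List.mem_cons] at hu hv
    simpa [dropUntil, hxu, hxv] using
      ih (hu.resolve_left (Ne.symm hxu)) (hv.resolve_left (Ne.symm hxv))

end DecidableEq

structure IsEarOf (S : Set W) (Q : Γ.Walk u v) : Prop where
  isPath : Q.IsPath
  ne : u ≠ v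
  start_mem : u ∈ S
  end_mem : v ∈ S
  eq_or_eq : ∀ z ∈ Q.support, z ∈ S → z = u ∨ z = v

theorem IsEarOf.reverse {S : Set W} {Q : Γ.Walk u v} (hQ : Q.IsEarOf S) : Q.reverse.IsEarOf S :=
  ⟨hQ.isPath.reverse, hQ.ne.symm, hQ.end_mem, hQ.start_mem,
    fun z hz hzS => (hQ.eq_or_eq z (by simpa using hz) hzS).symm⟩

end Walk

open Walk

theorem exists_isPath_even_length_iff (hΓ : ¬HasOddCircuit Γ) {u v : W} (p : Γ.Walk u v) :
    ∃ q : Γ.Walk u v, q.IsPath ∧ (Even q.length ↔ Even p.length) := by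
  classical
  induction p with
  | nil => exact ⟨nil, .nil, Iff.rfl⟩
  | @cons u u' v h p ih =>
    obtain ⟨q, hq, hqp⟩ := ih
    by_cases hu : u ∈ q.support
    · refine ⟨q.dropUntil u hu, hq.dropUntil hu, ?_⟩
      have hlen := congrArg length (q.take_spec hu)
      have ht := hq.takeUntil hu
      -- otherwise `u`, followed by `q` up to `u`, would be an odd cycle
      have hodd : Odd (q.takeUntil u hu).length := by
        by_contra heven
        rw [Nat.not_odd_iff_even] at heven
        refine hΓ ⟨u, cons h (q.takeUntil u hu), (cons_isCycle_iff _ h).2 ⟨ht, fun he => ?_⟩, ?_⟩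
        · rw [Sym2.eq_swap] at he
          simp [ht.length_eq_one_of_mem_edges he] at heven
        · simpa [Nat.odd_add_one] using heven
      rw [length_append] at hlen
      rw [length_cons, Nat.even_add_one, ← hqp, ← hlen, Nat.even_add]
      have := Nat.not_even_iff_odd.2 hodd
      tauto
    · exact ⟨cons h q, hq.cons hu, by simp [Nat.even_add_one, hqp]⟩

theorem colorable_two_of_not_hasOddCircuit (hΓ : ¬HasOddCircuit Γ) : Γ.Colorable 2 :=
  two_colorable_iff_forall_loop_even.2 fun u c => by
    obtain ⟨q, hq, hqc⟩ := exists_isPath_even_length_iff hΓ c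
    rw [← hqc, (isPath_iff_nil.1 hq).eq_nil, length_nil]
    exact Even.zero

theorem Coloring.odd_length_iff_ne (c : Γ.Coloring Bool) {u v : W} (p : Γ.Walk u v) :
    Odd p.length ↔ c u ≠ c v := by
  rw [c.odd_length_iff_not_congr]
  cases c u <;> cases c v <;> simp

theorem exists_isPath_notMem {v : W} (hv : ((⊤ : Γ.Subgraph).deleteVerts {v}).coe.Connected)
    {x y : W} (hx : x ≠ v) (hy : y ≠ v) : ∃ p : Γ.Walk x y, p.IsPath ∧ v ∉ p.support := by
  classical
  obtain ⟨q⟩ := hv.preconnected ⟨x, by simpa⟩ ⟨y, by simpa⟩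
  refine ⟨q.bypass.map (Subgraph.hom _), q.bypass_isPath.map Subgraph.hom_injective, ?_⟩
  intro hv'
  change v ∈ (q.bypass.map (Subgraph.hom _)).support at hv'
  rw [Walk.support_map, List.mem_map] at hv'
  obtain ⟨z, -, hz⟩ := hv'
  simpa [← hz] using z.2

theorem Subgraph.mem_verts_of_mem_support_map {H : Γ.Subgraph} {x y : H.verts}
    {p : H.coe.Walk x y} {z : W} (hz : z ∈ (p.map H.hom).support) : z ∈ H.verts := by
  rw [Walk.support_map, List.mem_map] at hz
  obtain ⟨z, -, rfl⟩ := hz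
  exact z.2

section DecidableEq

variable [DecidableEq W]

theorem exists_internallyDisjoint_of_adj {a a' b z : W} (h : Γ.Adj a a')
    (hab : a ≠ b) (ha'b : a' ≠ b) {P₁ P₂ : Γ.Walk a' b} (hP₁ : P₁.IsPath) (hP₂ : P₂.IsPath)
    (hd : P₁.InternallyDisjoint P₂) {R : Γ.Walk a z} (hR : R.IsPath) (hz : z ∈ P₁.support)
    (hza' : z ≠ a') (hRP : ∀ y ∈ R.support, y ∈ P₁.support ∨ y ∈ P₂.support → y = z) :
    ∃ p q : Γ.Walk a b, p.IsPath ∧ q.IsPath ∧ p.InternallyDisjoint q ∧ 1 < q.length := by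
  have ha : a ∉ P₂.support := fun ha => by
    obtain rfl := hRP a R.start_mem_support (.inr ha)
    grind [InternallyDisjoint]
  have := hP₁.start_notMem_dropUntil hz hza'
  have := P₁.support_dropUntil_subset_support hz
  refine ⟨R.append (P₁.dropUntil z hz), .cons h P₂,
    hR.append_of_inter (hP₁.dropUntil hz) fun y hy hy' => hRP y hy (.inl (this hy')),
    hP₂.cons ha, fun y hy hy' => ?_, one_lt_length_of_mem (z := a') (by simp) h.ne' ha'b⟩
  simp only [mem_support_append_iff, support_cons, List.mem_cons] at hy hy'
  grind [InternallyDisjoint]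

theorem isEarOf_append_takeUntil {S : Set W} {w u z s : W} {R₁ R₂ : Γ.Walk w u}
    (hR₁ : R₁.IsPath) (hR₂ : R₂.IsPath) (hd : R₁.InternallyDisjoint R₂) (hu : u ∈ S)
    (hR₁S : ∀ y ∈ R₁.support, y ∈ S → y = u) (hR₂S : ∀ y ∈ R₂.support, y ∈ S → y = u)
    (hz : z ∈ R₁.support) (hzu : z ≠ u) {R : Γ.Walk z s} (hR : R.IsPath) (hs : s ∈ S)
    (hRS : ∀ y ∈ R.support, y ∈ S → y = s)
    (hRR : ∀ y ∈ R.support, y ∈ R₁.support ∨ y ∈ R₂.support → y = z) :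
    (R₂.reverse.append ((R₁.takeUntil z hz).append R)).IsEarOf S := by
  have hT := R₁.support_takeUntil_subset_support hz
  have huT := endpoint_notMem_support_takeUntil hR₁ hz hzu.symm
  have hsu : s ≠ u := by
    rintro rfl; exact hzu (hRR s R.end_mem_support (.inl R₁.end_mem_support)).symm
  refine ⟨hR₂.reverse.append_of_inter ((hR₁.takeUntil hz).append_of_inter hR fun y hy hy' =>
      hRR y hy' (.inl (hT hy))) fun y hy hy' => ?_, hsu.symm, hu, hs, fun y hy hyS => ?_⟩
  · simp only [support_reverse, List.mem_reverse, mem_support_append_iff] at hy hy'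
    grind [InternallyDisjoint]
  · simp only [support_reverse, List.mem_reverse, mem_support_append_iff] at hy
    grind

end DecidableEq

structure IsTheta {x y : W} (P : Fin 3 → Γ.Walk x y) : Prop where
  isPath : ∀ i, (P i).IsPath
  internallyDisjoint : ∀ i j, i ≠ j → (P i).InternallyDisjoint (P j)
  /-- rules out two copies of the edge `xy` -/
  one_lt_length : ∀ i j, i ≠ j → 1 < (P i).length ∨ 1 < (P j).length

namespace IsTheta

variable {x y : W} {P : Fin 3 → Γ.Walk x y}

theorem ne (hT : IsTheta P) : x ≠ y := by
  rintro rfl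
  have := hT.one_lt_length 0 1 (by decide)
  simp [(isPath_iff_nil.1 (hT.isPath 0)).eq_nil, (isPath_iff_nil.1 (hT.isPath 1)).eq_nil] at this

theorem reverse (hT : IsTheta P) : IsTheta fun i => (P i).reverse where
  isPath i := (hT.isPath i).reverse
  internallyDisjoint i j hij z hi hj :=
    (hT.internallyDisjoint i j hij z (by simpa using hi) (by simpa using hj)).symm
  one_lt_length i j hij := by simpa using hT.one_lt_length i j hij

theorem of_three {A B C : Γ.Walk x y} (hA : A.IsPath) (hB : B.IsPath) (hC : C.IsPath)
    (hAB : A.InternallyDisjoint B) (hAC : A.InternallyDisjoint C) (hBC : B.InternallyDisjoint C)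
    (lAB : 1 < A.length ∨ 1 < B.length) (lAC : 1 < A.length ∨ 1 < C.length)
    (lBC : 1 < B.length ∨ 1 < C.length) : IsTheta ![A, B, C] where
  isPath i := by fin_cases i <;> assumption
  internallyDisjoint i j hij := by
    fin_cases i <;> fin_cases j <;> simp_all [InternallyDisjoint.symm]
  one_lt_length i j hij := by
    fin_cases i <;> fin_cases j <;> simp_all [or_comm]

theorem update (hT : IsTheta P) {i : Fin 3} {P' : Γ.Walk x y} (hP' : P'.IsPath)
    (hd : ∀ j, j ≠ i → P'.InternallyDisjoint (P j)) (hl : 1 < P'.length) :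
    IsTheta (Function.update P i P') where
  isPath j := by
    rcases eq_or_ne j i with rfl | hj
    · simpa
    · simpa [hj] using hT.isPath j
  internallyDisjoint j k hjk := by
    rcases eq_or_ne j i with rfl | hj <;> rcases eq_or_ne k j with rfl | hk
    · exact absurd rfl hjk
    · simpa [hk] using hd k hk
    · exact absurd rfl hjk
    · rcases eq_or_ne k i with rfl | hki
      · simpa [hj] using (hd j hj).symm
      · simpa [hj, hki] using hT.internallyDisjoint j k hjk
  one_lt_length j k hjk := by
    rcases eq_or_ne j i with rfl | hj
    · simp [hl]
    rcases eq_or_ne k i with rfl | hk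
    · simp [hl]
    · simpa [hj, hk] using hT.one_lt_length j k hjk

theorem containsOddThetaThrough (hT : IsTheta P) (c : Γ.Coloring Bool) (hc : c x ≠ c y) {w : W}
    (hw : ∃ i, w ∈ (P i).support) : ContainsOddThetaThrough Γ w := by
  have d := hT.internallyDisjoint
  have l := hT.one_lt_length
  refine ⟨x, y, P 0, P 1, P 2, hT.ne, hT.isPath 0, hT.isPath 1, hT.isPath 2,
    (c.odd_length_iff_ne _).2 hc, (c.odd_length_iff_ne _).2 hc, (c.odd_length_iff_ne _).2 hc,
    d 0 1 (by decide), d 0 2 (by decide), d 1 2 (by decide),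
    (d 0 1 (by decide)).notMem_edges (hT.isPath 0) (hT.isPath 1) (l 0 1 (by decide)),
    (d 0 2 (by decide)).notMem_edges (hT.isPath 0) (hT.isPath 2) (l 0 2 (by decide)),
    (d 1 2 (by decide)).notMem_edges (hT.isPath 1) (hT.isPath 2) (l 1 2 (by decide)), ?_⟩
  obtain ⟨i, hi⟩ := hw
  fin_cases i <;> simp_all

variable [DecidableEq W]

theorem update_splice (hT : IsTheta P) {i : Fin 3} {u v : W} (hu : u ∈ (P i).support)
    (hv : v ∈ ((P i).dropUntil u hu).support) {Q : Γ.Walk u v}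
    (hQ : Q.IsEarOf {z | ∃ j, z ∈ (P j).support}) (hlen : 1 < Q.length) :
    IsTheta (Function.update P i (((P i).takeUntil u hu).append
      (Q.append (((P i).dropUntil u hu).dropUntil v hv)))) := by
  have hP := hT.isPath i
  have hTD := hP.eq_of_mem_takeUntil_of_mem_dropUntil hu
  have hTsub := (P i).support_takeUntil_subset_support hu
  have hDsub := (P i).support_dropUntil_subset_support hu
  have hDDsub := ((P i).dropUntil u hu).support_dropUntil_subset_support hv
  have huD := (hP.dropUntil hu).start_notMem_dropUntil hv hQ.ne.symm
  have hQP : ∀ z ∈ Q.support, ∀ j, z ∈ (P j).support → z = u ∨ z = v :=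
    fun z hz j hj => hQ.eq_or_eq z hz ⟨j, hj⟩
  refine hT.update ((hP.takeUntil hu).append_of_inter (hQ.isPath.append_of_inter
    ((hP.dropUntil hu).dropUntil hv) fun z hz hz' => ?_) fun z hz hz' => ?_)
    (fun j hj z hz hz' => ?_) (by simp only [length_append]; omega)
  · grind [List.Subset]
  · simp only [mem_support_append_iff] at hz'
    grind [List.Subset]
  · have hij := hT.internallyDisjoint i j hj.symm
    simp only [mem_support_append_iff] at hz
    unfold InternallyDisjoint at hij
    grind [List.Subset]

theorem isTheta_ear_ends (hT : IsTheta P) {i j : Fin 3} (hij : i ≠ j) {u v : W}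
    (hu : u ∈ (P i).support) (hv : v ∈ (P j).support) (hux : u ≠ x) (huy : u ≠ y)
    (hvx : v ≠ x) (hvy : v ≠ y) {Q : Γ.Walk u v}
    (hQ : Q.IsEarOf {z | ∃ k, z ∈ (P k).support}) (hlen : 1 < Q.length) :
    IsTheta ![Q, ((P i).takeUntil u hu).reverse.append ((P j).takeUntil v hv),
      ((P i).dropUntil u hu).append ((P j).dropUntil v hv).reverse] := by
  have hPi := hT.isPath i
  have hPj := hT.isPath j
  have hdij : ∀ z ∈ (P i).support, z ∈ (P j).support → z = x ∨ z = y :=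
    hT.internallyDisjoint i j hij
  have hQP : ∀ z ∈ Q.support, ∀ k, z ∈ (P k).support → z = u ∨ z = v :=
    fun z hz k hk => hQ.eq_or_eq z hz ⟨k, hk⟩
  have hTDi := hPi.eq_of_mem_takeUntil_of_mem_dropUntil hu
  have hTDj := hPj.eq_of_mem_takeUntil_of_mem_dropUntil hv
  have hTi := (P i).support_takeUntil_subset_support hu
  have hDi := (P i).support_dropUntil_subset_support hu
  have hTj := (P j).support_takeUntil_subset_support hv
  have hDj := (P j).support_dropUntil_subset_support hv
  have hyTi := endpoint_notMem_support_takeUntil hPi hu huy.symm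
  have hyTj := endpoint_notMem_support_takeUntil hPj hv hvy.symm
  have hxDi := hPi.start_notMem_dropUntil hu hux
  have hxDj := hPj.start_notMem_dropUntil hv hvx
  have hxTi := ((P i).takeUntil u hu).start_mem_support
  refine of_three hQ.isPath ?_ ?_ ?_ ?_ ?_ (.inl hlen) (.inl hlen)
    (.inl (one_lt_length_of_mem (z := x) (by simp [hxTi]) hux.symm hvx.symm))
  · refine (hPi.takeUntil hu).reverse.append_of_inter (hPj.takeUntil hv) fun z hz hz' => ?_
    simp only [support_reverse, List.mem_reverse] at hz
    grind [List.Subset]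
  · refine (hPi.dropUntil hu).append_of_inter (hPj.dropUntil hv).reverse fun z hz hz' => ?_
    simp only [support_reverse, List.mem_reverse] at hz'
    grind [List.Subset]
  · intro z hz hz'
    simp only [support_reverse, List.mem_reverse, mem_support_append_iff] at hz'
    grind [List.Subset]
  · intro z hz hz'
    simp only [support_reverse, List.mem_reverse, mem_support_append_iff] at hz'
    grind [List.Subset]
  · intro z hz hz'
    simp only [support_reverse, List.mem_reverse, mem_support_append_iff] at hz hz'
    grind [List.Subset]

theorem isTheta_ear_start_end (hT : IsTheta P) {i j k : Fin 3} (hij : i ≠ j) (hik : i ≠ k)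
    (hjk : j ≠ k) {u v : W} (hu : u ∈ (P i).support) (hv : v ∈ (P j).support) (hux : u ≠ x)
    (huy : u ≠ y) (hvx : v ≠ x) {Q : Γ.Walk u v}
    (hQ : Q.IsEarOf {z | ∃ k, z ∈ (P k).support}) (hlen : 1 < Q.length) :
    IsTheta ![Q.append ((P j).dropUntil v hv), ((P i).takeUntil u hu).reverse.append (P k),
      (P i).dropUntil u hu] := by
  have hPi := hT.isPath i
  have hPj := hT.isPath j
  have hdij : ∀ z ∈ (P i).support, z ∈ (P j).support → z = x ∨ z = y :=
    hT.internallyDisjoint i j hij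
  have hdik : ∀ z ∈ (P i).support, z ∈ (P k).support → z = x ∨ z = y :=
    hT.internallyDisjoint i k hik
  have hdjk : ∀ z ∈ (P j).support, z ∈ (P k).support → z = x ∨ z = y :=
    hT.internallyDisjoint j k hjk
  have hQP : ∀ z ∈ Q.support, ∀ k, z ∈ (P k).support → z = u ∨ z = v :=
    fun z hz k hk => hQ.eq_or_eq z hz ⟨k, hk⟩
  have hTDi := hPi.eq_of_mem_takeUntil_of_mem_dropUntil hu
  have hTi := (P i).support_takeUntil_subset_support hu
  have hDi := (P i).support_dropUntil_subset_support hu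
  have hDj := (P j).support_dropUntil_subset_support hv
  have hyTi := endpoint_notMem_support_takeUntil hPi hu huy.symm
  have hxDi := hPi.start_notMem_dropUntil hu hux
  have hxDj := hPj.start_notMem_dropUntil hv hvx
  have hxTi := ((P i).takeUntil u hu).start_mem_support
  refine of_three (hQ.isPath.append_of_inter (hPj.dropUntil hv) fun z hz hz' => ?_)
    ((hPi.takeUntil hu).reverse.append_of_inter (hT.isPath k) fun z hz hz' => ?_)
    (hPi.dropUntil hu) ?_ ?_ ?_ (.inl (by simp only [length_append]; omega))
    (.inl (by simp only [length_append]; omega))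
    (.inl (one_lt_length_of_mem (z := x) (by simp [hxTi]) hux.symm hT.ne))
  · grind [List.Subset]
  · simp only [support_reverse, List.mem_reverse] at hz
    grind [List.Subset]
  · intro z hz hz'
    simp only [support_reverse, List.mem_reverse, mem_support_append_iff] at hz hz'
    grind [List.Subset]
  · intro z hz hz'
    simp only [mem_support_append_iff] at hz
    grind [List.Subset]
  · intro z hz hz'
    simp only [support_reverse, List.mem_reverse, mem_support_append_iff] at hz
    grind [List.Subset]

theorem exists_isTheta_of_isEarOf (hT : IsTheta P) (c : Γ.Coloring Bool) (hc : c x ≠ c y)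
    {u v : W} {Q : Γ.Walk u v} (hQ : Q.IsEarOf {z | ∃ i, z ∈ (P i).support})
    (hlen : 1 < Q.length) :
    ∃ (x' y' : W) (P' : Fin 3 → Γ.Walk x' y'), IsTheta P' ∧ c x' ≠ c y' ∧
      ∀ z ∈ Q.support, ∃ i, z ∈ (P' i).support := by
  by_cases hsame : ∃ k, u ∈ (P k).support ∧ v ∈ (P k).support
  · obtain ⟨k, hu, hv⟩ := hsame
    rcases mem_dropUntil_or_mem_dropUntil (P k) hu hv with h | h
    · exact ⟨x, y, _, hT.update_splice hu h hQ hlen, hc, fun z hz => ⟨k, by simp [hz]⟩⟩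
    · exact ⟨x, y, _, hT.update_splice hv h hQ.reverse (by simpa), hc,
        fun z hz => ⟨k, by simp [hz]⟩⟩
  push Not at hsame
  obtain ⟨i, hu⟩ := hQ.start_mem
  obtain ⟨j, hv⟩ := hQ.end_mem
  have hij : i ≠ j := by rintro rfl; exact hsame i hu hv
  have hux : u ≠ x := by rintro rfl; exact hsame j (start_mem_support _) hv
  have huy : u ≠ y := by rintro rfl; exact hsame j (end_mem_support _) hv
  have hvx : v ≠ x := by rintro rfl; exact hsame i hu (start_mem_support _)
  have hvy : v ≠ y := by rintro rfl; exact hsame i hu (end_mem_support _)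
  obtain ⟨k, hik, hjk⟩ : ∃ k, i ≠ k ∧ j ≠ k := by clear hu hv; revert i j; decide
  by_cases hcuv : c u ≠ c v
  · exact ⟨u, v, _, hT.isTheta_ear_ends hij hu hv hux huy hvx hvy hQ hlen, hcuv,
      fun z hz => ⟨0, by simpa⟩⟩
  by_cases hcuy : c u ≠ c y
  · exact ⟨u, y, _, hT.isTheta_ear_start_end hij hik hjk hu hv hux huy hvx hQ hlen, hcuy,
      fun z hz => ⟨0, by simp [hz]⟩⟩
  -- now `c u = c y ≠ c x`, so the theta from `u` to `x` is odd
  exact ⟨u, x, _, hT.reverse.isTheta_ear_start_end hij hik hjk (by simpa using hu)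
    (by simpa using hv) huy hux hvy (by simpa using hQ) hlen, by grind,
    fun z hz => ⟨0, by simp [hz]⟩⟩

end IsTheta

end SimpleGraph

section

open SimpleGraph Walk

variable {W : Type*} {Γ : SimpleGraph W}

theorem TwoConnected.exists_isPath_one_lt_length_of_adj [DecidableEq W] (hΓ : TwoConnected Γ)
    {a b : W} (h : Γ.Adj a b) : ∃ q : Γ.Walk a b, q.IsPath ∧ 1 < q.length := by
  obtain ⟨-, hcard, hdel⟩ := hΓ
  have : Finite W := Nat.finite_of_card_ne_zero (by omega)
  obtain ⟨c, hca, hcb⟩ := ENat.exists_ne_ne_of_three_le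
    (by rw [ENat.card_eq_coe_natCard]; exact_mod_cast hcard) a b
  obtain ⟨p₁, -, hb⟩ := exists_isPath_notMem (hdel b) h.ne hcb
  obtain ⟨p₂, -, ha⟩ := exists_isPath_notMem (hdel a) hca h.ne'
  have hab : s(a, b) ∉ (p₁.append p₂).edges := fun he => by
    rw [edges_append, List.mem_append] at he
    exact he.elim (fun he => hb (p₁.snd_mem_support_of_mem_edges he))
      (fun he => ha (p₂.fst_mem_support_of_mem_edges he))
  exact ⟨_, (p₁.append p₂).bypass_isPath,
    one_lt_length_of_notMem_edges h.ne fun he => hab (edges_bypass_subset_edges _ he)⟩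

theorem TwoConnected.exists_internallyDisjoint [DecidableEq W] (hΓ : TwoConnected Γ) {a b : W}
    (hab : a ≠ b) :
    ∃ p q : Γ.Walk a b, p.IsPath ∧ q.IsPath ∧ p.InternallyDisjoint q ∧ 1 < q.length := by
  obtain ⟨p⟩ := hΓ.1.preconnected a b
  induction p with
  | nil => exact absurd rfl hab
  | @cons a a' b h p ih =>
    by_cases ha'b : a' = b
    · subst ha'b
      obtain ⟨q, hq, hlen⟩ := hΓ.exists_isPath_one_lt_length_of_adj h
      exact ⟨h.toWalk, q, h.isPath_toWalk, hq, by simp [InternallyDisjoint], hlen⟩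
    obtain ⟨P₁, P₂, hP₁, hP₂, hd, -⟩ := ih ha'b
    obtain ⟨r, hr, ha'r⟩ := exists_isPath_notMem (hΓ.2.2 a') h.ne (Ne.symm ha'b)
    obtain ⟨z, ⟨hzP, hza'⟩, R, r', rfl, hR⟩ := r.exists_eq_append_of_end_mem
      {y | (y ∈ P₁.support ∨ y ∈ P₂.support) ∧ y ≠ a'} ⟨.inl P₁.end_mem_support, Ne.symm ha'b⟩
    have hRP : ∀ y ∈ R.support, y ∈ P₁.support ∨ y ∈ P₂.support → y = z := fun y hy hy' =>
      hR y hy ⟨hy', by rintro rfl; exact ha'r ((mem_support_append_iff _ _).2 (.inl hy))⟩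
    rcases hzP with hz | hz
    · exact exists_internallyDisjoint_of_adj h hab ha'b hP₁ hP₂ hd hr.of_append_left hz hza' hRP
    · exact exists_internallyDisjoint_of_adj h hab ha'b hP₂ hP₁ hd.symm hr.of_append_left hz hza'
        fun y hy hy' => hRP y hy hy'.symm

theorem TwoConnected.exists_isEarOf_of_internallyDisjoint [DecidableEq W] (hΓ : TwoConnected Γ)
    {S : Set W} {w u t : W} (hw : w ∉ S) {R₁ R₂ : Γ.Walk w u} (hR₁ : R₁.IsPath)
    (hR₂ : R₂.IsPath) (hd : R₁.InternallyDisjoint R₂) (hu : u ∈ S)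
    (hR₁S : ∀ y ∈ R₁.support, y ∈ S → y = u) (hR₂S : ∀ y ∈ R₂.support, y ∈ S → y = u)
    (ht : t ∈ S) (htu : t ≠ u) : ∃ (u v : W) (Q : Γ.Walk u v), Q.IsEarOf S ∧ w ∈ Q.support := by
  have hwu : w ≠ u := fun h => hw (h ▸ hu)
  obtain ⟨r, hr, hur⟩ := exists_isPath_notMem (hΓ.2.2 u) htu hwu
  obtain ⟨z, ⟨hzR, hzu⟩, R₃, r₃, rfl, hR₃⟩ := r.exists_eq_append_of_end_mem
    {y | (y ∈ R₁.support ∨ y ∈ R₂.support) ∧ y ≠ u} ⟨.inl R₁.start_mem_support, hwu⟩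
  obtain ⟨s, hs, R₄, r₄, hR₃R₄, hR₄S⟩ := R₃.reverse.exists_eq_append_of_end_mem S ht
  have hR₄ : R₄.IsPath := by
    have := hr.of_append_left.reverse
    rw [hR₃R₄] at this
    exact this.of_append_left
  have hRR : ∀ y ∈ R₄.support, y ∈ R₁.support ∨ y ∈ R₂.support → y = z := fun y hy hy' => by
    have hy₃ : y ∈ R₃.support := by
      rw [← List.mem_reverse, ← support_reverse, hR₃R₄]
      exact (mem_support_append_iff _ _).2 (.inl hy)
    exact hR₃ y hy₃ ⟨hy', by rintro rfl; exact hur ((mem_support_append_iff _ _).2 (.inl hy₃))⟩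
  rcases hzR with hz | hz
  · exact ⟨_, _, _, isEarOf_append_takeUntil hR₁ hR₂ hd hu hR₁S hR₂S hz hzu hR₄ hs hR₄S hRR,
      by simp⟩
  · exact ⟨_, _, _, isEarOf_append_takeUntil hR₂ hR₁ hd.symm hu hR₂S hR₁S hz hzu hR₄ hs hR₄S
      fun y hy hy' => hRR y hy hy'.symm, by simp⟩

theorem TwoConnected.exists_isEarOf_mem_support [DecidableEq W] (hΓ : TwoConnected Γ)
    {S : Set W} {w t₁ t₂ : W} (hw : w ∉ S) (ht₁ : t₁ ∈ S) (ht₂ : t₂ ∈ S) (ht : t₁ ≠ t₂) :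
    ∃ (u v : W) (Q : Γ.Walk u v), Q.IsEarOf S ∧ w ∈ Q.support := by
  obtain ⟨P₁, P₂, hP₁, hP₂, hd, -⟩ := hΓ.exists_internallyDisjoint (ne_of_mem_of_not_mem ht₁ hw).symm
  obtain ⟨u₁, hu₁, R₁, r₁, rfl, hR₁S⟩ := P₁.exists_eq_append_of_end_mem S ht₁
  obtain ⟨u₂, hu₂, R₂, r₂, rfl, hR₂S⟩ := P₂.exists_eq_append_of_end_mem S ht₁
  have hR : ∀ y ∈ R₁.support, y ∈ R₂.support → y = w ∨ y = t₁ := fun y h₁ h₂ =>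
    hd y ((mem_support_append_iff _ _).2 (.inl h₁)) ((mem_support_append_iff _ _).2 (.inl h₂))
  by_cases hu : u₁ = u₂
  · subst hu
    obtain ⟨t, ht, htu⟩ : ∃ t ∈ S, t ≠ u₁ := by
      by_cases h : t₁ = u₁
      exacts [⟨t₂, ht₂, h ▸ ht.symm⟩, ⟨t₁, ht₁, h⟩]
    exact hΓ.exists_isEarOf_of_internallyDisjoint hw hP₁.of_append_left hP₂.of_append_left
      (fun y h₁ h₂ => (hR y h₁ h₂).imp_right fun hy => hR₁S y h₁ (by rwa [hy])) hu₁ hR₁S hR₂S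
      ht htu
  refine ⟨u₁, u₂, R₁.reverse.append R₂, ⟨hP₁.of_append_left.reverse.append_of_inter
    hP₂.of_append_left fun y hy hy' => ?_, hu, hu₁, hu₂, fun y hy hyS => ?_⟩, by simp⟩
  · simp only [support_reverse, List.mem_reverse] at hy
    grind
  · simp only [mem_support_append_iff, support_reverse, List.mem_reverse] at hy
    grind

theorem IsEar.exists_isTheta {H : Γ.Subgraph} (hH : TwoConnected H.coe) {e : EarData Γ}
    (he : IsEar H e) : ∃ P : Fin 3 → Γ.Walk e.1 e.2.1, IsTheta P := by
  classical
  obtain ⟨a, b, r⟩ := e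
  obtain ⟨hr, hab, ha, hb, hint, hedge⟩ := he
  obtain ⟨p, q, hp, hq, hd, hlen⟩ :=
    hH.exists_internallyDisjoint (a := ⟨a, ha⟩) (b := ⟨b, hb⟩) (by simpa using hab)
  have hrH : ∀ {s : Γ.Walk a b}, (∀ z ∈ s.support, z ∈ H.verts) → s.InternallyDisjoint r :=
    fun hs z hz hz' => by by_contra! h; exact hint z hz' h.1 h.2 (hs z hz)
  -- the ear and `p` are not both the edge `ab`, as the ear has no edge of `H`
  have hpr : 1 < p.length ∨ 1 < r.length := by
    by_contra! h
    have hp : s(⟨a, ha⟩, ⟨b, hb⟩) ∈ p.edges := by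
      by_contra h'; have := one_lt_length_of_notMem_edges (by simpa using hab) h'; omega
    have hr : s(a, b) ∈ r.edges := by
      by_contra h'; have := one_lt_length_of_notMem_edges hab h'; omega
    exact hedge _ hr (p.adj_of_mem_edges hp)
  let p' : Γ.Walk a b := p.map H.hom
  let q' : Γ.Walk a b := q.map H.hom
  have hp'H : ∀ z ∈ p'.support, z ∈ H.verts := fun z hz =>
    Subgraph.mem_verts_of_mem_support_map hz
  have hq'H : ∀ z ∈ q'.support, z ∈ H.verts := fun z hz =>
    Subgraph.mem_verts_of_mem_support_map hz
  have lp : p'.length = p.length := Walk.length_map _ _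
  have lq : q'.length = q.length := Walk.length_map _ _
  exact ⟨![p', q', r], IsTheta.of_three (hp.map Subgraph.hom_injective)
    (hq.map Subgraph.hom_injective) hr (hd.map Subgraph.hom_injective) (hrH hp'H) (hrH hq'H)
    (by omega) (by omega) (by omega)⟩

end

theorem stmt14_general {V : Type*} (G : SimpleGraph V)
    (hG : TwoConnected G) (hbip : ¬ HasOddCircuit G)
    (H : G.Subgraph) (hH : TwoConnected H.coe)
    (e : EarData G) (he : IsEar H e) (heodd : Odd e.2.2.length) :
    ∀ w : V, ContainsOddThetaThrough G w := by
  classical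
  intro w
  let c : G.Coloring Bool :=
    G.recolorOfEquiv finTwoEquiv (colorable_two_of_not_hasOddCircuit hbip).some
  have hc : c e.1 ≠ c e.2.1 := (c.odd_length_iff_ne _).1 heodd
  obtain ⟨P, hP⟩ := he.exists_isTheta hH
  by_cases hw : ∃ i, w ∈ (P i).support
  · exact hP.containsOddThetaThrough c hc hw
  obtain ⟨u, v, Q, hQ, hwQ⟩ := hG.exists_isEarOf_mem_support (S := {z | ∃ i, z ∈ (P i).support})
    hw ⟨0, (P 0).start_mem_support⟩ ⟨0, (P 0).end_mem_support⟩ hP.ne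
  have hQlen : 1 < Q.length := Walk.one_lt_length_of_mem hwQ
    (by rintro rfl; exact hw hQ.start_mem) (by rintro rfl; exact hw hQ.end_mem)
  obtain ⟨x, y, P', hP', hc', hQP'⟩ := hP.exists_isTheta_of_isEarOf c hc hQ hQlen
  exact hP'.containsOddThetaThrough c hc' (hQP' w hwQ)

/-- if `G` is 2-connected and bipartite and `H` is a 2-connected
subgraph of `G` having an odd ear in `G`, then every vertex of `G` belongs to
an odd theta subgraph of `G`. -/
theorem stmt14 {V : Type*} [Fintype V] (G : SimpleGraph V)
    (hG : TwoConnected G) (hbip : ¬ HasOddCircuit G)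
    (H : G.Subgraph) (hH : TwoConnected H.coe)
    (e : EarData G) (he : IsEar H e) (heodd : Odd e.2.2.length) :
    ∀ w : V, ContainsOddThetaThrough G w :=
  stmt14_general G hG hbip H hH e he heodd
end
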